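/- arXiv:1703.08872 — 9 statements merged into one kernel-verified Lean document; each statement's English description precedes it below -/
import Mathlib

section
/- If Σ_{k ∈ ℕ^d} ∏_{j=1}^d e_j(k_j) < ∞, then every M ∈ E_e(Y) converges to a limit M_∞ ∈ Y as min_{1≤j≤d} k_j → ∞ (i.e., along the filter of indices whose minimal coordinate tends to infinity), the family ((Δ_mix M)(k))_{k ∈ ℕ^d} is absolutely summable, and M_∞ = Σ_{k ∈ ℕ^d} (Δ_mix M)(k). -/
/-- The `j`-th unidirectional difference operator:
`(Δ_j M)(k) = M(k) - M(k - e_j)` if `k j > 0`, and `(Δ_j M)(k) = M(k)` if `k j = 0`. -/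
def diffOp {d : ℕ} {Y : Type*} [AddCommGroup Y] (j : Fin d) (M : (Fin d → ℕ) → Y) :
    (Fin d → ℕ) → Y :=
  fun k => if k j = 0 then M k else M k - M (Function.update k j (k j - 1))

/-- The mixed difference operator `Δ_mix = Δ_1 ∘ ⋯ ∘ Δ_d`. -/
def mixDiff {d : ℕ} {Y : Type*} [AddCommGroup Y] (M : (Fin d → ℕ) → Y) :
    (Fin d → ℕ) → Y :=
  (List.finRange d).foldr (fun j F => diffOp j F) M

/-- The space `E_e(Y)` of approximation methods whose mixed differences decay
like `K₁ ∏_j e_j(k_j)` for some `K₁ > 0`. -/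
def Espace {d : ℕ} {Y : Type*} [NormedAddCommGroup Y] (e : Fin d → ℕ → ℝ) :
    Set ((Fin d → ℕ) → Y) :=
  {M | ∃ K₁ > (0 : ℝ), ∀ k : Fin d → ℕ, ‖mixDiff M k‖ ≤ K₁ * ∏ j, e j (k j)}

/-!
Summing along direction `j` inverts `Δ_j` and commutes with `Δ_i` for `i ≠ j`, so summing the
mixed differences over the box `{l ≤ k}` telescopes back to `M k`. The bound defining `E_e(Y)`
makes `Δ_mix M` absolutely summable, and since these boxes exhaust `ℕ^d` as `k → ∞`, `M k`
converges to the sum of `Δ_mix M`.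
-/

open Finset Function

section Telescoping

variable {d : ℕ} {Y : Type*} [AddCommGroup Y]

def sumOp (j : Fin d) (F : (Fin d → ℕ) → Y) : (Fin d → ℕ) → Y :=
  fun k => ∑ m ∈ range (k j + 1), F (update k j m)

theorem sumOp_diffOp_self (j : Fin d) (F : (Fin d → ℕ) → Y) : sumOp j (diffOp j F) = F := by
  funext k
  have htelescope := eq_sum_range_sub' (fun m => F (update k j m)) (k j)
  simp only [update_eq_self] at htelescope
  rw [htelescope, sumOp]
  refine sum_congr rfl fun m _ => ?_
  rcases m with _ | m <;> simp [diffOp]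

theorem sumOp_diffOp_of_ne {i j : Fin d} (hij : i ≠ j) (F : (Fin d → ℕ) → Y) :
    sumOp j (diffOp i F) = diffOp i (sumOp j F) := by
  funext k
  by_cases h : k i = 0
  · simp [sumOp, diffOp, update_of_ne hij, h]
  · simp [sumOp, diffOp, update_of_ne hij, update_of_ne hij.symm, h, sum_sub_distrib,
      update_comm hij.symm]

theorem foldr_sumOp_diffOp_of_notMem {L : List (Fin d)} {j : Fin d} (hj : j ∉ L)
    (F : (Fin d → ℕ) → Y) :
    L.foldr sumOp (diffOp j F) = diffOp j (L.foldr sumOp F) := by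
  induction L with
  | nil => rfl
  | cons i L ih =>
    rw [List.mem_cons, not_or] at hj
    rw [List.foldr_cons, List.foldr_cons, ih hj.2, sumOp_diffOp_of_ne hj.1]

theorem foldr_sumOp_foldr_diffOp {L : List (Fin d)} (hL : L.Nodup) (F : (Fin d → ℕ) → Y) :
    L.foldr sumOp (L.foldr diffOp F) = F := by
  induction L with
  | nil => rfl
  | cons j L ih =>
    rw [List.nodup_cons] at hL
    simp only [List.foldr_cons, foldr_sumOp_diffOp_of_notMem hL.1, ih hL.2, sumOp_diffOp_self]

theorem foldr_sumOp_apply {L : List (Fin d)} (hL : L.Nodup) (F : (Fin d → ℕ) → Y)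
    (k : Fin d → ℕ) :
    L.foldr sumOp F k = ∑ l ∈ Iic k with ∀ i ∉ L, l i = k i, F l := by
  induction L generalizing k with
  | nil =>
    have hbox : {l ∈ Iic k | ∀ i ∉ ([] : List (Fin d)), l i = k i} = {k} := by
      ext l
      simp only [mem_filter, mem_Iic, List.not_mem_nil, not_false_eq_true, forall_const,
        ← funext_iff, mem_singleton]
      exact ⟨And.right, fun h => ⟨h.le, h⟩⟩
    rw [hbox, sum_singleton, List.foldr_nil]
  | cons j L ih =>
    rw [List.nodup_cons] at hL
    have hfiber : ∀ m ∈ range (k j + 1),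
        {l ∈ {l ∈ Iic k | ∀ i ∉ j :: L, l i = k i} | l j = m}
          = {l ∈ Iic (update k j m) | ∀ i ∉ L, l i = update k j m i} := by
      intro m hm
      ext l
      simp only [mem_filter, mem_Iic, Pi.le_def, List.mem_cons, not_or, and_imp]
      constructor
      · rintro ⟨⟨hle, hout⟩, rfl⟩
        refine ⟨fun i => ?_, fun i hiL => ?_⟩ <;> rcases eq_or_ne i j with rfl | hij
        · simp
        · simpa [hij] using hle i
        · simp
        · simpa [hij] using hout i hij hiL
      · rintro ⟨hle, hout⟩
        have hlj : l j = m := by simpa using hout j hL.1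
        refine ⟨⟨fun i => ?_, fun i hij hiL => ?_⟩, hlj⟩
        · rcases eq_or_ne i j with rfl | hij
          · exact hlj ▸ Nat.lt_succ_iff.1 (mem_range.1 hm)
          · simpa [hij] using hle i
        · simpa [hij] using hout i hiL
    rw [← sum_fiberwise_of_maps_to (g := fun l => l j) (t := range (k j + 1))
      (fun l hl => by simpa [Nat.lt_succ_iff] using (mem_Iic.1 (mem_filter.1 hl).1) j)]
    rw [List.foldr_cons, sumOp]
    exact sum_congr rfl fun m hm => by rw [ih hL.2, hfiber m hm]

theorem sum_Iic_mixDiff (M : (Fin d → ℕ) → Y) (k : Fin d → ℕ) :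
    ∑ l ∈ Iic k, mixDiff M l = M k := by
  have hbox := foldr_sumOp_apply (List.nodup_finRange d) (mixDiff M) k
  simp only [List.mem_finRange, not_true_eq_false, IsEmpty.forall_iff, implies_true,
    filter_true] at hbox
  rw [← hbox, mixDiff, foldr_sumOp_foldr_diffOp (List.nodup_finRange d)]

theorem tendsto_of_hasSum_mixDiff [TopologicalSpace Y] {M : (Fin d → ℕ) → Y} {s : Y}
    (h : HasSum (mixDiff M) s) : Filter.Tendsto M Filter.atTop (nhds s) :=
  (h.comp Filter.tendsto_finset_Iic_atTop_atTop).congr (sum_Iic_mixDiff M)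

end Telescoping

theorem summable_norm_mixDiff_of_mem_Espace {d : ℕ} {Y : Type*} [NormedAddCommGroup Y]
    {e : Fin d → ℕ → ℝ} (hsum : Summable fun k : Fin d → ℕ => ∏ j, e j (k j))
    {M : (Fin d → ℕ) → Y} (hM : M ∈ Espace e) :
    Summable fun k => ‖mixDiff M k‖ := by
  obtain ⟨K₁, -, hbound⟩ := hM
  exact (hsum.mul_left K₁).of_nonneg_of_le (fun k => norm_nonneg _) hbound

theorem Espace_limit_and_decomposition_general
    {d : ℕ} {Y : Type*} [NormedAddCommGroup Y]
    [CompleteSpace Y]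
    (e : Fin d → ℕ → ℝ)
    (hsum : Summable fun k : Fin d → ℕ => ∏ j, e j (k j))
    (M : (Fin d → ℕ) → Y) (hM : M ∈ Espace e) :
    ∃ Minf : Y,
      Filter.Tendsto M Filter.atTop (nhds Minf) ∧
      (Summable fun k : Fin d → ℕ => ‖mixDiff M k‖) ∧
      HasSum (mixDiff M) Minf := by
  have hnorm := summable_norm_mixDiff_of_mem_Espace hsum hM
  have hasSum_mixDiff := hnorm.of_norm.hasSum
  exact ⟨_, tendsto_of_hasSum_mixDiff hasSum_mixDiff, hnorm, hasSum_mixDiff⟩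

/-- if `∑_{k ∈ ℕ^d} ∏_j e_j(k_j) < ∞`, then every `M ∈ E_e(Y)` has a
limit `M_∞` as `min_j k_j → ∞` (i.e. along `atTop` for the componentwise order),
the family `(Δ_mix M)(k)` is absolutely summable, and `M_∞ = ∑_{k} (Δ_mix M)(k)`. -/
theorem Espace_limit_and_decomposition
    {d : ℕ} (hd : 1 ≤ d) {Y : Type*} [NormedAddCommGroup Y] [NormedSpace ℝ Y]
    [CompleteSpace Y]
    (e : Fin d → ℕ → ℝ) (hepos : ∀ j i, 0 < e j i) (heanti : ∀ j, StrictAnti (e j))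
    (hsum : Summable fun k : Fin d → ℕ => ∏ j, e j (k j))
    (M : (Fin d → ℕ) → Y) (hM : M ∈ Espace e) :
    ∃ Minf : Y,
      Filter.Tendsto M Filter.atTop (nhds Minf) ∧
      (Summable fun k : Fin d → ℕ => ‖mixDiff M k‖) ∧
      HasSum (mixDiff M) Minf :=
  Espace_limit_and_decomposition_general e hsum M hM
end

section
/- (Error expansions) Assume the ratios e_j(k)/e_j(k+1) are uniformly bounded above over k ∈ ℕ and j ∈ {1,…,d}. Suppose M : ℕ^d → Y and M_∞ ∈ Y satisfy M(k) − M_∞ = Σ_{∅ ≠ J ⊆ {1,…,d}} M_J(k_J) for all k ∈ ℕ^d, where k_J := (k_j)_{j∈J}, the M_J : ℕ^{|J|} → Y are functions, and ‖M_J(k_J)‖_Y ≤ ∏_{j∈J} e_j(k_j) for all k and all nonempty J ⊆ {1,…,d}. Then M ∈ E_e(Y), i.e., there exists K₁ > 0 with ‖(Δ_mix M)(k)‖_Y ≤ K₁ ∏_{j=1}^d e_j(k_j) for all k ∈ ℕ^d. -/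
/-!
Expanding the iterated differences, `(Δ_mix M)(k)` is the alternating sum of the values
`M(k - 1_S)` over the sets `S` of coordinates with `k_j > 0`. A function that does not depend on
a coordinate `i` is annihilated whenever `k_i > 0`, since the terms for `S` and `S ∪ {i}` cancel.
So the only `M_J` (and, when `k = 0`, `M_∞`) contributing at `k` are those with `k_j = 0` for all
`j ∉ J`, for which `∏_{j ∈ J} e_j(k_j) = ∏_j e_j(k_j) / ∏_{j ∉ J} e_j(0)`; each of the at most
`2^d` terms is then bounded through `e_j(k_j - 1) ≤ R e_j(k_j)`.
-/

open Finset

def decrOn {d : ℕ} (k : Fin d → ℕ) (S : Finset (Fin d)) : Fin d → ℕ :=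
  fun j => if j ∈ S then k j - 1 else k j

section MixedDifferences

variable {d : ℕ} {Y : Type*}

@[simp]
lemma decrOn_empty (k : Fin d → ℕ) : decrOn k ∅ = k := by
  ext j
  simp [decrOn]

lemma decrOn_insert {k : Fin d → ℕ} {S : Finset (Fin d)} {j : Fin d} (hj : j ∉ S) :
    decrOn k (insert j S) = decrOn (Function.update k j (k j - 1)) S := by
  ext i
  by_cases hij : i = j
  · subst hij
    simp [decrOn, hj]
  · simp [decrOn, hij]

lemma decrOn_insert_apply_of_ne (k : Fin d → ℕ) (S : Finset (Fin d)) {i j : Fin d}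
    (hji : j ≠ i) : decrOn k (insert i S) j = decrOn k S j := by
  simp [decrOn, hji]

section AddCommGroup

variable [AddCommGroup Y]

theorem foldr_diffOp_apply (N : (Fin d → ℕ) → Y) {l : List (Fin d)} (hl : l.Nodup)
    (k : Fin d → ℕ) :
    l.foldr (fun j F => diffOp j F) N k =
      ∑ S ∈ (l.toFinset.filter (k · ≠ 0)).powerset, (-1 : ℤ) ^ #S • N (decrOn k S) := by
  induction l generalizing k with
  | nil => simp
  | cons j t ih =>
    obtain ⟨hjt, ht⟩ := List.nodup_cons.mp hl
    rw [List.foldr_cons, diffOp, List.toFinset_cons, filter_insert]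
    by_cases hkj : k j = 0
    · simp only [hkj, if_true, ne_eq, not_true_eq_false, if_false, ih ht]
    set A := t.toFinset.filter (k · ≠ 0)
    have hjA : j ∉ A := by simp [A, hjt]
    have hA : t.toFinset.filter (Function.update k j (k j - 1) · ≠ 0) = A :=
      filter_congr fun i hi => by
        rw [Function.update_of_ne (by rintro rfl; exact hjt (List.mem_toFinset.mp hi))]
    rw [if_neg hkj, if_pos hkj, ih ht, ih ht, hA, sum_powerset_insert hjA, sub_eq_add_neg,
      ← sum_neg_distrib]
    congr 1
    refine sum_congr rfl fun S hS => ?_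
    have hjS : j ∉ S := fun h => hjA (mem_powerset.mp hS h)
    rw [decrOn_insert hjS, card_insert_of_notMem hjS, pow_succ, mul_neg_one, neg_smul]

theorem mixDiff_apply (N : (Fin d → ℕ) → Y) (k : Fin d → ℕ) :
    mixDiff N k =
      ∑ S ∈ (univ.filter (k · ≠ 0)).powerset, (-1 : ℤ) ^ #S • N (decrOn k S) := by
  rw [mixDiff, foldr_diffOp_apply N (List.nodup_finRange d), List.toFinset_finRange]

@[simp]
theorem mixDiff_zero : mixDiff (0 : (Fin d → ℕ) → Y) = 0 :=
  funext fun k => by simp only [mixDiff_apply, Pi.zero_apply, smul_zero, sum_const_zero]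

theorem mixDiff_add (M N : (Fin d → ℕ) → Y) : mixDiff (M + N) = mixDiff M + mixDiff N :=
  funext fun k => by simp only [mixDiff_apply, Pi.add_apply, smul_add, sum_add_distrib]

theorem mixDiff_eq_zero_of_forall_eq {N : (Fin d → ℕ) → Y} {i : Fin d}
    (hN : ∀ k k', (∀ j, j ≠ i → k j = k' j) → N k = N k') {k : Fin d → ℕ} (hki : k i ≠ 0) :
    mixDiff N k = 0 := by
  have hi : i ∈ univ.filter (k · ≠ 0) := by simpa using hki
  rw [mixDiff_apply, ← insert_erase hi, sum_powerset_insert (notMem_erase i _),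
    ← sum_add_distrib]
  refine sum_eq_zero fun S hS => ?_
  have hiS : i ∉ S := fun h => notMem_erase i _ (mem_powerset.mp hS h)
  rw [hN _ (decrOn k S) fun j hj => decrOn_insert_apply_of_ne k S hj,
    card_insert_of_notMem hiS, pow_succ, mul_neg_one, neg_smul, add_neg_cancel]

end AddCommGroup

variable {e : Fin d → ℕ → ℝ} {R : ℝ}

lemma prod_decrOn_le (hepos : ∀ j i, 0 < e j i) (hR1 : 1 ≤ R)
    (hR : ∀ j i, e j i ≤ R * e j (i + 1)) (J : Finset (Fin d)) {S : Finset (Fin d)}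
    {k : Fin d → ℕ} (hS : ∀ j ∈ S, k j ≠ 0) :
    ∏ j ∈ J, e j (decrOn k S j) ≤ R ^ d * ∏ j ∈ J, e j (k j) := by
  have hfactor : ∀ j, e j (decrOn k S j) ≤ R * e j (k j) := fun j => by
    unfold decrOn
    split_ifs with hjS
    · simpa [Nat.sub_add_cancel (Nat.pos_of_ne_zero (hS j hjS))] using hR j (k j - 1)
    · exact le_mul_of_one_le_left (hepos j _).le hR1
  calc ∏ j ∈ J, e j (decrOn k S j)
      ≤ ∏ j ∈ J, R * e j (k j) := prod_le_prod (fun j _ => (hepos j _).le) fun j _ => hfactor j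
    _ = R ^ #J * ∏ j ∈ J, e j (k j) := by rw [prod_mul_distrib, prod_const]
    _ ≤ R ^ d * ∏ j ∈ J, e j (k j) := by
      gcongr ?_ * _
      · exact prod_nonneg fun j _ => (hepos j _).le
      · exact pow_le_pow_right₀ hR1 (J.card_le_univ.trans_eq (Fintype.card_fin d))

theorem norm_mixDiff_le_two_pow_mul [SeminormedAddCommGroup Y] {N : (Fin d → ℕ) → Y}
    {k : Fin d → ℕ} {A : ℝ} (hA : ∀ S ⊆ univ.filter (k · ≠ 0), ‖N (decrOn k S)‖ ≤ A) :
    ‖mixDiff N k‖ ≤ 2 ^ d * A := by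
  set T := univ.filter (k · ≠ 0)
  have hcard : (#T.powerset : ℝ) ≤ 2 ^ d := by
    rw [card_powerset, Nat.cast_pow, Nat.cast_ofNat]
    exact pow_le_pow_right₀ one_le_two (T.card_le_univ.trans_eq (Fintype.card_fin d))
  have hterm : ∀ S ∈ T.powerset, ‖(-1 : ℤ) ^ #S • N (decrOn k S)‖ ≤ A := fun S hS =>
    ((norm_zsmul_le _ _).trans_eq (by simp)).trans (hA S (mem_powerset.mp hS))
  rw [mixDiff_apply]
  calc ‖∑ S ∈ T.powerset, (-1 : ℤ) ^ #S • N (decrOn k S)‖ ≤ #T.powerset * A := by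
        simpa using norm_sum_le_of_le _ hterm
    _ ≤ 2 ^ d * A :=
        mul_le_mul_of_nonneg_right hcard ((norm_nonneg _).trans (hA ∅ (empty_subset T)))

theorem norm_mixDiff_le [SeminormedAddCommGroup Y] (hepos : ∀ j i, 0 < e j i) (hR1 : 1 ≤ R)
    (hR : ∀ j i, e j i ≤ R * e j (i + 1)) {J : Finset (Fin d)} {N : (Fin d → ℕ) → Y} {B : ℝ}
    (hdep : ∀ k k', (∀ j ∈ J, k j = k' j) → N k = N k')
    (hN : ∀ k, ‖N k‖ ≤ B * ∏ j ∈ J, e j (k j)) (k : Fin d → ℕ) :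
    ‖mixDiff N k‖ ≤ B * ((2 * R) ^ d / ∏ j ∈ Jᶜ, e j 0) * ∏ j, e j (k j) := by
  have hB : 0 ≤ B :=
    nonneg_of_mul_nonneg_left ((norm_nonneg _).trans (hN k)) (prod_pos fun j _ => hepos j _)
  have hcompl : 0 < ∏ j ∈ Jᶜ, e j 0 := prod_pos fun j _ => hepos j 0
  by_cases hsupp : ∃ i ∉ J, k i ≠ 0
  · obtain ⟨i, hiJ, hki⟩ := hsupp
    have hdep_i : ∀ k k', (∀ j, j ≠ i → k j = k' j) → N k = N k' := fun k k' h =>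
      hdep k k' fun j hj => h j (ne_of_mem_of_not_mem hj hiJ)
    rw [mixDiff_eq_zero_of_forall_eq hdep_i hki, norm_zero]
    have hprod : 0 < ∏ j, e j (k j) := prod_pos fun j _ => hepos j _
    positivity
  push Not at hsupp
  have hsplit : ∏ j, e j (k j) = (∏ j ∈ J, e j (k j)) * ∏ j ∈ Jᶜ, e j 0 := by
    rw [← prod_mul_prod_compl J]
    congr 1
    exact prod_congr rfl fun j hj => by rw [hsupp j (mem_compl.mp hj)]
  have hcompute : 2 ^ d * (B * (R ^ d * ∏ j ∈ J, e j (k j))) =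
      B * ((2 * R) ^ d / ∏ j ∈ Jᶜ, e j 0) * ∏ j, e j (k j) := by
    rw [hsplit]
    field_simp
    ring
  refine (norm_mixDiff_le_two_pow_mul fun S hS => ?_).trans_eq hcompute
  have hSk : ∀ j ∈ S, k j ≠ 0 := fun j hj => (mem_filter.mp (hS hj)).2
  exact (hN _).trans (mul_le_mul_of_nonneg_left (prod_decrOn_le hepos hR1 hR J hSk) hB)

theorem mem_Espace_of_norm_mixDiff_le [NormedAddCommGroup Y] (hepos : ∀ j i, 0 < e j i)
    {M : (Fin d → ℕ) → Y} (K : ℝ) (hK : ∀ k, ‖mixDiff M k‖ ≤ K * ∏ j, e j (k j)) :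
    M ∈ Espace e :=
  ⟨max K 1, by positivity, fun k => (hK k).trans <|
    mul_le_mul_of_nonneg_right (le_max_left K 1) (prod_nonneg fun j _ => (hepos j _).le)⟩

def Espace.addSubmonoid [NormedAddCommGroup Y] (hepos : ∀ j i, 0 < e j i) :
    AddSubmonoid ((Fin d → ℕ) → Y) where
  carrier := Espace e
  zero_mem' := mem_Espace_of_norm_mixDiff_le hepos 0 fun k => by simp
  add_mem' := by
    rintro M N ⟨K, -, hK⟩ ⟨L, -, hL⟩
    refine mem_Espace_of_norm_mixDiff_le hepos (K + L) fun k => ?_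
    rw [mixDiff_add, Pi.add_apply, add_mul]
    exact (norm_add_le _ _).trans (add_le_add (hK k) (hL k))

theorem mem_Espace_of_dependsOn [NormedAddCommGroup Y] (hepos : ∀ j i, 0 < e j i)
    (hR1 : 1 ≤ R) (hR : ∀ j i, e j i ≤ R * e j (i + 1)) {J : Finset (Fin d)}
    {N : (Fin d → ℕ) → Y} {B : ℝ}
    (hdep : ∀ k k', (∀ j ∈ J, k j = k' j) → N k = N k')
    (hN : ∀ k, ‖N k‖ ≤ B * ∏ j ∈ J, e j (k j)) : N ∈ Espace e :=
  mem_Espace_of_norm_mixDiff_le hepos _ (norm_mixDiff_le hepos hR1 hR hdep hN)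

end MixedDifferences

theorem error_expansion_mem_Espace_general
    {d : ℕ} {Y : Type*} [NormedAddCommGroup Y]
    (e : Fin d → ℕ → ℝ) (hepos : ∀ j i, 0 < e j i)
    (R : ℝ) (hR : ∀ (j : Fin d) (i : ℕ), e j i / e j (i + 1) ≤ R)
    (M : (Fin d → ℕ) → Y) (Minf : Y)
    (MJ : Finset (Fin d) → (Fin d → ℕ) → Y)
    (hMJdep : ∀ (J : Finset (Fin d)) (k k' : Fin d → ℕ),
      (∀ j ∈ J, k j = k' j) → MJ J k = MJ J k')
    (hdecomp : ∀ k : Fin d → ℕ,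
      M k - Minf = ∑ J ∈ Finset.univ.powerset.filter (· ≠ (∅ : Finset (Fin d))), MJ J k)
    (hbound : ∀ (J : Finset (Fin d)), J ≠ ∅ → ∀ k : Fin d → ℕ,
      ‖MJ J k‖ ≤ ∏ j ∈ J, e j (k j)) :
    M ∈ Espace e := by
  have hR' : ∀ j i, e j i ≤ max R 1 * e j (i + 1) := fun j i =>
    ((div_le_iff₀ (hepos j (i + 1))).mp (hR j i)).trans <|
      mul_le_mul_of_nonneg_right (le_max_left R 1) (hepos j _).le
  have hM : M = (fun _ => Minf) + ∑ J ∈ univ.powerset.filter (· ≠ ∅), MJ J :=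
    funext fun k => by rw [Pi.add_apply, Finset.sum_apply, ← hdecomp k, add_sub_cancel]
  rw [hM]
  let E := Espace.addSubmonoid (Y := Y) hepos
  refine E.add_mem ?_ (E.sum_mem fun J hJ => ?_)
  · exact mem_Espace_of_dependsOn hepos (le_max_right R 1) hR' (J := ∅) (B := ‖Minf‖)
      (fun _ _ _ => rfl) fun _ => by simp
  · exact mem_Espace_of_dependsOn hepos (le_max_right R 1) hR' (B := 1) (hMJdep J)
      fun k => by simpa using hbound J (mem_filter.mp hJ).2 k

/-- error expansions: if the ratios `e_j(k)/e_j(k+1)` are uniformly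
bounded above, and `M(k) - M_∞ = ∑_{∅ ≠ J ⊆ {1,…,d}} M_J(k_J)` where each `M_J`
depends only on the coordinates in `J` and satisfies `‖M_J(k_J)‖ ≤ ∏_{j∈J} e_j(k_j)`,
then `M ∈ E_e(Y)`. -/
theorem error_expansion_mem_Espace
    {d : ℕ} (hd : 1 ≤ d) {Y : Type*} [NormedAddCommGroup Y] [NormedSpace ℝ Y]
    [CompleteSpace Y]
    (e : Fin d → ℕ → ℝ) (hepos : ∀ j i, 0 < e j i) (heanti : ∀ j, StrictAnti (e j))
    (R : ℝ) (hR : ∀ (j : Fin d) (i : ℕ), e j i / e j (i + 1) ≤ R)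
    (M : (Fin d → ℕ) → Y) (Minf : Y)
    (MJ : Finset (Fin d) → (Fin d → ℕ) → Y)
    (hMJdep : ∀ (J : Finset (Fin d)) (k k' : Fin d → ℕ),
      (∀ j ∈ J, k j = k' j) → MJ J k = MJ J k')
    (hdecomp : ∀ k : Fin d → ℕ,
      M k - Minf = ∑ J ∈ Finset.univ.powerset.filter (· ≠ (∅ : Finset (Fin d))), MJ J k)
    (hbound : ∀ (J : Finset (Fin d)), J ≠ ∅ → ∀ k : Fin d → ℕ,
      ‖MJ J k‖ ≤ ∏ j ∈ J, e j (k j)) :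
    M ∈ Espace e :=
  error_expansion_mem_Espace_general e hepos R hR M Minf MJ hMJdep hdecomp hbound
end

section
/- (Multilinearity) Let Y₁,…,Y_m and Y be Banach spaces, let A : Y₁ × ⋯ × Y_m → Y be a continuous multilinear map, let d = d₁ + ⋯ + d_m, and let e_1,…,e_d : ℕ → (0,∞) be strictly decreasing. If for each i ∈ {1,…,m} the function M_i : ℕ^{d_i} → Y_i belongs to E_{(e_j)_{j=d₁+⋯+d_{i−1}+1}^{d₁+⋯+d_i}}(Y_i), then the function M : ℕ^d → Y defined by M(k) := A(M₁(k^{(1)}),…,M_m(k^{(m)})), where k = (k^{(1)},…,k^{(m)}) with k^{(i)} ∈ ℕ^{d_i}, belongs to E_{(e_j)_{j=1}^{d}}(Y). -/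
/-- The `j`-th unidirectional difference operator on methods indexed by a finite
index set `ι`: `(Δ_j M)(k) = M(k) - M(k - e_j)` if `k j > 0`, else `M(k)`. -/
def diffOpG {ι : Type*} [DecidableEq ι] {Y : Type*} [AddCommGroup Y] (j : ι)
    (M : (ι → ℕ) → Y) : (ι → ℕ) → Y :=
  fun k => if k j = 0 then M k else M k - M (Function.update k j (k j - 1))

/-- The mixed difference operator `Δ_mix`, the composition of all the `Δ_j`. -/
noncomputable def mixDiffG {ι : Type*} [Fintype ι] [DecidableEq ι] {Y : Type*}
    [AddCommGroup Y] (M : (ι → ℕ) → Y) : (ι → ℕ) → Y :=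
  (Finset.univ : Finset ι).toList.foldr (fun j F => diffOpG j F) M

/-- The space `E_e(Y)` of approximation methods whose mixed differences decay
like `K₁ ∏_j e_j(k_j)` for some `K₁ > 0`. -/
def EspaceG {ι : Type*} [Fintype ι] [DecidableEq ι] {Y : Type*}
    [NormedAddCommGroup Y] (e : ι → ℕ → ℝ) : Set ((ι → ℕ) → Y) :=
  {M | ∃ K₁ > (0 : ℝ), ∀ k : ι → ℕ, ‖mixDiffG M k‖ ≤ K₁ * ∏ j, e j (k j)}

/-! In a direction of block `i`, the difference operator acts on `k ↦ A(M₁(k⁽¹⁾),…,M_m(k⁽ᵐ⁾))`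
only through the `i`-th argument of `A`, by multilinearity. As the difference operators commute,
`Δ_mix` of the composite is therefore `A` applied to the blockwise mixed differences `Δ_mix M_i`,
and the bound follows from `‖A v‖ ≤ ‖A‖ ∏ ‖v_i‖` and the splitting of `∏_j e_j(k_j)` over the
blocks. -/

section MixedDifferences

variable {ι : Type*} [DecidableEq ι] {Y : Type*} [AddCommGroup Y]

theorem diffOpG_comm (j j' : ι) (M : (ι → ℕ) → Y) :
    diffOpG j (diffOpG j' M) = diffOpG j' (diffOpG j M) := by
  rcases eq_or_ne j j' with rfl | h
  · rfl
  funext k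
  simp only [diffOpG, Function.update_of_ne h, Function.update_of_ne h.symm,
    Function.update_comm h]
  split_ifs <;> abel

instance : LeftCommutative (fun (j : ι) (F : (ι → ℕ) → Y) => diffOpG j F) :=
  ⟨diffOpG_comm⟩

noncomputable def mixDiffOn (s : Finset ι) (M : (ι → ℕ) → Y) : (ι → ℕ) → Y :=
  s.val.foldr (fun j F => diffOpG j F) M

theorem mixDiffOn_empty (M : (ι → ℕ) → Y) : mixDiffOn ∅ M = M := rfl

theorem mixDiffOn_insert {s : Finset ι} {j : ι} (hj : j ∉ s) (M : (ι → ℕ) → Y) :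
    mixDiffOn (insert j s) M = diffOpG j (mixDiffOn s M) := by
  rw [mixDiffOn, Finset.insert_val_of_notMem hj, Multiset.foldr_cons, mixDiffOn]

theorem mixDiffG_eq_mixDiffOn_univ [Fintype ι] (M : (ι → ℕ) → Y) :
    mixDiffG M = mixDiffOn Finset.univ M := by
  rw [mixDiffOn, ← Finset.coe_toList, Multiset.coe_foldr, mixDiffG]

end MixedDifferences

section Multilinear

variable {R : Type*} [Ring R] {ι : Type*} [DecidableEq ι] {κ : ι → Type*}
  [∀ i, DecidableEq (κ i)] {N : ι → Type*} [∀ i, AddCommGroup (N i)] [∀ i, Module R (N i)]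
  {Y : Type*} [AddCommGroup Y] [Module R Y]

theorem diffOpG_multilinear_comp (f : MultilinearMap R N Y)
    (G : (i : ι) → (κ i → ℕ) → N i) (j : Σ i, κ i) :
    diffOpG j (fun k : (Σ i, κ i) → ℕ => f (fun i => G i (fun a => k ⟨i, a⟩))) =
      fun k => f (fun i => Function.update G j.1 (diffOpG j.2 (G j.1)) i (fun a => k ⟨i, a⟩)) := by
  funext k
  obtain ⟨i₀, a₀⟩ := j
  have hcurry (x : ℕ) (i : ι) : (fun a => Function.update k ⟨i₀, a₀⟩ x ⟨i, a⟩) =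
      Function.update (fun i a => k ⟨i, a⟩) i₀ (Function.update (fun a => k ⟨i₀, a⟩) a₀ x) i :=
    congrFun (Sigma.curry_update (γ := fun _ _ => ℕ) ⟨i₀, a₀⟩ k x) i
  rw [funext (Function.apply_update (fun i F => F (fun a => k ⟨i, a⟩)) G i₀ _)]
  by_cases h : k ⟨i₀, a₀⟩ = 0
  · simp [diffOpG, h]
  · simp only [diffOpG, h, if_false, hcurry, Function.apply_update G, Function.update_eq_self,
      MultilinearMap.map_update_sub]

theorem preimage_sigmaMk_insert_self (s : Finset (Σ i, κ i)) (i : ι) (a : κ i) :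
    (insert ⟨i, a⟩ s).preimage (Sigma.mk i) sigma_mk_injective.injOn =
      insert a (s.preimage (Sigma.mk i) sigma_mk_injective.injOn) := by
  ext; simp

theorem preimage_sigmaMk_insert_of_ne (s : Finset (Σ i, κ i)) {i i₀ : ι} (hi : i ≠ i₀)
    (a : κ i₀) :
    (insert ⟨i₀, a⟩ s).preimage (Sigma.mk i) sigma_mk_injective.injOn =
      s.preimage (Sigma.mk i) sigma_mk_injective.injOn := by
  ext; simp [hi]

theorem mixDiffOn_multilinear_comp (f : MultilinearMap R N Y)
    (G : (i : ι) → (κ i → ℕ) → N i) (s : Finset (Σ i, κ i)) :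
    mixDiffOn s (fun k : (Σ i, κ i) → ℕ => f (fun i => G i (fun a => k ⟨i, a⟩))) =
      fun k => f (fun i =>
        mixDiffOn (s.preimage (Sigma.mk i) sigma_mk_injective.injOn) (G i) (fun a => k ⟨i, a⟩)) := by
  induction s using Finset.induction_on with
  | empty => simp only [Finset.preimage_empty, mixDiffOn_empty]
  | insert j s hj ih =>
    obtain ⟨i₀, a₀⟩ := j
    rw [mixDiffOn_insert hj, ih, diffOpG_multilinear_comp]
    funext k
    congr 1
    funext i
    rcases eq_or_ne i i₀ with rfl | hi
    · rw [Function.update_self, preimage_sigmaMk_insert_self,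
        mixDiffOn_insert (by simpa using hj)]
    · rw [Function.update_of_ne hi, preimage_sigmaMk_insert_of_ne s hi]

theorem mixDiffG_multilinear_comp [Fintype ι] [∀ i, Fintype (κ i)] (f : MultilinearMap R N Y)
    (G : (i : ι) → (κ i → ℕ) → N i) :
    mixDiffG (fun k : (Σ i, κ i) → ℕ => f (fun i => G i (fun a => k ⟨i, a⟩))) =
      fun k => f (fun i => mixDiffG (G i) (fun a => k ⟨i, a⟩)) := by
  simp only [mixDiffG_eq_mixDiffOn_univ, mixDiffOn_multilinear_comp, Finset.preimage_univ]

end Multilinear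

theorem multilinear_map_mem_Espace_general
    (m : ℕ) (dd : Fin m → ℕ)
    (Yi : Fin m → Type*) [∀ i, NormedAddCommGroup (Yi i)]
    [∀ i, NormedSpace ℝ (Yi i)]
    {Y : Type*} [NormedAddCommGroup Y] [NormedSpace ℝ Y]
    (A : ContinuousMultilinearMap ℝ Yi Y)
    (e : ((i : Fin m) × Fin (dd i)) → ℕ → ℝ)
    (hepos : ∀ j i, 0 < e j i)
    (Mi : (i : Fin m) → (Fin (dd i) → ℕ) → Yi i)
    (hMi : ∀ i : Fin m, Mi i ∈ EspaceG (fun (a : Fin (dd i)) => e ⟨i, a⟩)) :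
    (fun k : ((i : Fin m) × Fin (dd i)) → ℕ =>
        A (fun i => Mi i (fun a => k ⟨i, a⟩))) ∈ EspaceG e := by
  choose K hKpos hK using hMi
  have hAK : 0 ≤ ‖A‖ * ∏ i, K i :=
    mul_nonneg (norm_nonneg A) (Finset.prod_nonneg fun i _ => (hKpos i).le)
  -- `‖A‖` may vanish, hence the `+ 1` to get a positive constant.
  refine ⟨‖A‖ * ∏ i, K i + 1, by positivity, fun k => ?_⟩
  have he : 0 ≤ ∏ j, e j (k j) := Finset.prod_nonneg fun j _ => (hepos j _).le
  have hcomp := mixDiffG_multilinear_comp A.toMultilinearMap Mi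
  rw [ContinuousMultilinearMap.coe_coe] at hcomp
  rw [hcomp]
  calc ‖A (fun i => mixDiffG (Mi i) (fun a => k ⟨i, a⟩))‖
      ≤ ‖A‖ * ∏ i, ‖mixDiffG (Mi i) (fun a => k ⟨i, a⟩)‖ := A.le_opNorm _
    _ ≤ ‖A‖ * ∏ i, (K i * ∏ a, e ⟨i, a⟩ (k ⟨i, a⟩)) := by gcongr with i; exact hK i _
    _ = (‖A‖ * ∏ i, K i) * ∏ j, e j (k j) := by
      rw [Finset.prod_mul_distrib, ← Finset.univ_sigma_univ, Finset.prod_sigma, mul_assoc]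
    _ ≤ (‖A‖ * ∏ i, K i + 1) * ∏ j, e j (k j) := by gcongr; linarith

/-- multilinearity: if `A : Y₁ × ⋯ × Y_m → Y` is a continuous
multilinear map between Banach spaces and `M_i ∈ E_{(e_j)_{j in block i}}(Y_i)`
for each `i`, then `k ↦ A(M₁(k^{(1)}),…,M_m(k^{(m)}))` belongs to
`E_{(e_j)_{j=1}^d}(Y)`, where `d = d₁ + ⋯ + d_m` and the coordinates of
`k ∈ ℕ^d` are grouped into blocks `k^{(i)} ∈ ℕ^{d_i}`. -/
theorem multilinear_map_mem_Espace
    (m : ℕ) (hm : 1 ≤ m) (dd : Fin m → ℕ) (hdd : ∀ i, 1 ≤ dd i)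
    (Yi : Fin m → Type*) [∀ i, NormedAddCommGroup (Yi i)]
    [∀ i, NormedSpace ℝ (Yi i)] [∀ i, CompleteSpace (Yi i)]
    {Y : Type*} [NormedAddCommGroup Y] [NormedSpace ℝ Y] [CompleteSpace Y]
    (A : ContinuousMultilinearMap ℝ Yi Y)
    (e : ((i : Fin m) × Fin (dd i)) → ℕ → ℝ)
    (hepos : ∀ j i, 0 < e j i) (heanti : ∀ j, StrictAnti (e j))
    (Mi : (i : Fin m) → (Fin (dd i) → ℕ) → Yi i)
    (hMi : ∀ i : Fin m, Mi i ∈ EspaceG (fun (a : Fin (dd i)) => e ⟨i, a⟩)) :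
    (fun k : ((i : Fin m) × Fin (dd i)) → ℕ =>
        A (fun i => Mi i (fun a => k ⟨i, a⟩))) ∈ EspaceG e :=
  multilinear_map_mem_Espace_general m dd Yi A e hepos Mi hMi
end

section
/- (Tensor product algorithms) Let Y₁,…,Y_d be Banach spaces and let M_j : ℕ → Y_j converge at the rates ‖M_j(i) − M_{∞,j}‖_{Y_j} ≤ e_j(i) to limits M_{∞,j} ∈ Y_j, where the e_j : ℕ → (0,∞) are strictly decreasing with uniformly bounded ratios e_j(i)/e_j(i+1). Let Y be a normed space and τ : Y₁ × ⋯ × Y_d → Y a multilinear map satisfying ‖τ(y₁,…,y_d)‖_Y ≤ ‖y₁‖_{Y₁} ⋯ ‖y_d‖_{Y_d} (for instance, the canonical map into the algebraic tensor product Y₁ ⊗ ⋯ ⊗ Y_d equipped with a cross norm). Then the function M : ℕ^d → Y defined by M(k) := τ(M₁(k₁),…,M_d(k_d)) belongs to E_e(Y); that is, there exists K₁ > 0 with ‖(Δ_mix M)(k)‖_Y ≤ K₁ ∏_{j=1}^d e_j(k_j) for all k ∈ ℕ^d. -/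
open Function

section BackDiff

variable {E : Type*} [AddCommGroup E]

def backDiff (N : ℕ → E) (i : ℕ) : E :=
  if i = 0 then N 0 else N i - N (i - 1)

@[simp]
theorem backDiff_zero (N : ℕ → E) : backDiff N 0 = N 0 := rfl

@[simp]
theorem backDiff_succ (N : ℕ → E) (i : ℕ) : backDiff N (i + 1) = N (i + 1) - N i := rfl

end BackDiff

section Multilinear

variable {d : ℕ} {Yi : Fin d → Type*} [∀ j, AddCommGroup (Yi j)] [∀ j, Module ℝ (Yi j)]
  {Y : Type*} [AddCommGroup Y] [Module ℝ Y] (τ : MultilinearMap ℝ Yi Y)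

theorem diffOp_multilinearMap_comp (a : Fin d) (g : (j : Fin d) → ℕ → Yi j) :
    diffOp a (fun k => τ fun j => g j (k j)) =
      fun k => τ fun j => update g a (backDiff (g a)) j (k j) := by
  funext k
  have hupd : (fun j => update g a (backDiff (g a)) j (k j)) =
      update (fun j => g j (k j)) a (backDiff (g a) (k a)) := by
    funext j; exact apply_update (fun j (h : ℕ → Yi j) => h (k j)) g a _ j
  rw [diffOp, hupd]
  split_ifs with hk
  · rw [hk, backDiff_zero, ← hk, update_eq_self]
  · obtain ⟨i, hi⟩ := Nat.exists_eq_add_one_of_ne_zero hk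
    have hshift : (fun j => g j (update k a (k a - 1) j)) =
        update (fun j => g j (k j)) a (g a (k a - 1)) := by
      funext j; exact apply_update (fun j (n : ℕ) => g j n) k a _ j
    rw [hshift, hi, backDiff_succ, τ.map_update_sub, Nat.add_sub_cancel, ← hi, update_eq_self]

theorem foldr_diffOp_multilinearMap_comp (g : (j : Fin d) → ℕ → Yi j)
    (l : List (Fin d)) (hl : l.Nodup) :
    l.foldr (fun j F => diffOp j F) (fun k => τ fun j => g j (k j)) =
      fun k => τ fun j => (if j ∈ l then backDiff (g j) else g j) (k j) := by
  induction l with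
  | nil => simp
  | cons a t ih =>
    obtain ⟨hat, ht⟩ := List.nodup_cons.mp hl
    rw [List.foldr_cons, ih ht, diffOp_multilinearMap_comp]
    congr! 3 with k j
    rcases eq_or_ne j a with rfl | hja
    · simp [hat]
    · simp [hja]

theorem mixDiff_multilinearMap_comp (g : (j : Fin d) → ℕ → Yi j) :
    mixDiff (fun k => τ fun j => g j (k j)) = fun k => τ fun j => backDiff (g j) (k j) := by
  rw [mixDiff, foldr_diffOp_multilinearMap_comp τ g _ (List.nodup_finRange d)]
  simp only [List.mem_finRange, if_true]

end Multilinear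

theorem exists_norm_backDiff_le {E : Type*} [SeminormedAddCommGroup E] {N : ℕ → E} {L : E}
    {e : ℕ → ℝ} (hepos : ∀ i, 0 < e i) {R : ℝ} (hR : ∀ i, e i / e (i + 1) ≤ R)
    (hrate : ∀ i, ‖N i - L‖ ≤ e i) :
    ∃ K > 0, ∀ i, ‖backDiff N i‖ ≤ K * e i := by
  have hRpos : 0 < R := (div_pos (hepos 0) (hepos 1)).trans_le (hR 0)
  have hN0 : 0 ≤ ‖N 0‖ / e 0 := div_nonneg (norm_nonneg _) (hepos 0).le
  refine ⟨1 + R + ‖N 0‖ / e 0, by positivity, fun i => ?_⟩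
  cases i with
  | zero =>
    calc ‖backDiff N 0‖ = ‖N 0‖ / e 0 * e 0 := by
          rw [backDiff_zero, div_mul_cancel₀ _ (hepos 0).ne']
      _ ≤ (1 + R + ‖N 0‖ / e 0) * e 0 := mul_le_mul_of_nonneg_right (by linarith) (hepos 0).le
  | succ i =>
    have hprev : e i ≤ R * e (i + 1) := (div_le_iff₀ (hepos (i + 1))).mp (hR i)
    calc ‖backDiff N (i + 1)‖ = ‖(N (i + 1) - L) - (N i - L)‖ := by
          rw [backDiff_succ, sub_sub_sub_cancel_right]
      _ ≤ e (i + 1) + e i := (norm_sub_le _ _).trans (add_le_add (hrate _) (hrate _))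
      _ ≤ (1 + R + ‖N 0‖ / e 0) * e (i + 1) := by nlinarith [hepos (i + 1)]

theorem tensor_product_mem_Espace_general
    {d : ℕ}
    (Yi : Fin d → Type*) [∀ j, NormedAddCommGroup (Yi j)]
    [∀ j, NormedSpace ℝ (Yi j)]
    {Y : Type*} [NormedAddCommGroup Y] [NormedSpace ℝ Y]
    (e : Fin d → ℕ → ℝ) (hepos : ∀ j i, 0 < e j i)
    (R : ℝ) (hR : ∀ (j : Fin d) (i : ℕ), e j i / e j (i + 1) ≤ R)
    (M : (j : Fin d) → ℕ → Yi j) (Minf : (j : Fin d) → Yi j)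
    (hrate : ∀ (j : Fin d) (i : ℕ), ‖M j i - Minf j‖ ≤ e j i)
    (τ : MultilinearMap ℝ Yi Y)
    (hτ : ∀ y : (j : Fin d) → Yi j, ‖τ y‖ ≤ ∏ j, ‖y j‖) :
    ∃ K₁ > (0 : ℝ), ∀ k : Fin d → ℕ,
      ‖mixDiff (fun k' : Fin d → ℕ => τ (fun j => M j (k' j))) k‖ ≤
        K₁ * ∏ j, e j (k j) := by
  choose K hKpos hK using fun j => exists_norm_backDiff_le (hepos j) (hR j) (hrate j)
  refine ⟨∏ j, K j, Finset.prod_pos fun j _ => hKpos j, fun k => ?_⟩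
  rw [mixDiff_multilinearMap_comp]
  calc ‖τ fun j => backDiff (M j) (k j)‖ ≤ ∏ j, ‖backDiff (M j) (k j)‖ := hτ _
    _ ≤ ∏ j, K j * e j (k j) :=
        Finset.prod_le_prod (fun j _ => norm_nonneg _) fun j _ => hK j (k j)
    _ = (∏ j, K j) * ∏ j, e j (k j) := Finset.prod_mul_distrib

/-- tensor product algorithms: let `M_j : ℕ → Y_j` converge to
limits `M_{∞,j}` at rates `‖M_j(i) - M_{∞,j}‖ ≤ e_j(i)`, with the `e_j` strictly
decreasing, positive, and with uniformly bounded ratios `e_j(i)/e_j(i+1)`; let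
`τ : Y₁ × ⋯ × Y_d → Y` be a multilinear map with `‖τ(y)‖ ≤ ∏_j ‖y_j‖` (e.g. the
canonical map into a tensor product with a cross norm). Then
`M(k) := τ(M₁(k₁),…,M_d(k_d))` belongs to `E_e(Y)`. -/
theorem tensor_product_mem_Espace
    {d : ℕ} (hd : 1 ≤ d)
    (Yi : Fin d → Type*) [∀ j, NormedAddCommGroup (Yi j)]
    [∀ j, NormedSpace ℝ (Yi j)] [∀ j, CompleteSpace (Yi j)]
    {Y : Type*} [NormedAddCommGroup Y] [NormedSpace ℝ Y]
    (e : Fin d → ℕ → ℝ) (hepos : ∀ j i, 0 < e j i) (heanti : ∀ j, StrictAnti (e j))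
    (R : ℝ) (hR : ∀ (j : Fin d) (i : ℕ), e j i / e j (i + 1) ≤ R)
    (M : (j : Fin d) → ℕ → Yi j) (Minf : (j : Fin d) → Yi j)
    (hrate : ∀ (j : Fin d) (i : ℕ), ‖M j i - Minf j‖ ≤ e j i)
    (τ : MultilinearMap ℝ Yi Y)
    (hτ : ∀ y : (j : Fin d) → Yi j, ‖τ y‖ ≤ ∏ j, ‖y j‖) :
    ∃ K₁ > (0 : ℝ), ∀ k : Fin d → ℕ,
      ‖mixDiff (fun k' : Fin d → ℕ => τ (fun j => M j (k' j))) k‖ ≤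
        K₁ * ∏ j, e j (k j) :=
  tensor_product_mem_Espace_general Yi e hepos R hR M Minf hrate τ hτ
end

section
/- The knapsack problem has a (not necessarily unique) solution: the supremum of |I|_e over all subsets I ⊆ ℕ^d with |I|_w ≤ W is finite and is attained by some subset I* ⊆ ℕ^d with |I*|_w ≤ W. -/
/-!
Every point of `ℕ^d` has weight at least `K₂ ∏ⱼ wⱼ(0)`, so a feasible set has at most
`N = ⌈W / (K₂ ∏ⱼ wⱼ(0))⌉` points. Replacing each coordinate of a point of a finite set `F` by its
rank among the values that coordinate takes on `F` is injective on `F` and lowers every coordinate,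
so it lowers the weight and raises the value, and it lands in the box `{0,…,#F - 1}^d`. Hence the
value of any feasible set is dominated by that of a feasible subset of the finite box
`{0,…,N - 1}^d`, and a maximiser over those subsets solves the problem.
-/

open scoped ENNReal

/-- `|I|_e := K₁ ∑_{k ∈ I} ∏_j e_j(k_j)`, with values in `[0,∞]`. -/
noncomputable def knapsackValue {d : ℕ} (K₁ : ℝ) (e : Fin d → ℕ → ℝ)
    (I : Set (Fin d → ℕ)) : ℝ≥0∞ :=
  ENNReal.ofReal K₁ * ∑' k : I, ∏ j, ENNReal.ofReal (e j ((k : Fin d → ℕ) j))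

/-- `|I|_w := K₂ ∑_{k ∈ I} ∏_j w_j(k_j)`, with values in `[0,∞]`. -/
noncomputable def knapsackWork {d : ℕ} (K₂ : ℝ) (w : Fin d → ℕ → ℝ)
    (I : Set (Fin d → ℕ)) : ℝ≥0∞ :=
  ENNReal.ofReal K₂ * ∑' k : I, ∏ j, ENNReal.ofReal (w j ((k : Fin d → ℕ) j))

open Finset

section RankCompress

variable {ι : Type*}

def rankCompress (s : Finset (ι → ℕ)) (k : ι → ℕ) : ι → ℕ :=
  fun j => Nat.count (· ∈ s.image (· j)) (k j)

lemma rankCompress_le (s : Finset (ι → ℕ)) (k : ι → ℕ) : rankCompress s k ≤ k :=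
  fun _ => Nat.count_le _

lemma rankCompress_lt_card {s : Finset (ι → ℕ)} {k : ι → ℕ} (hk : k ∈ s) (j : ι) :
    rankCompress s k j < #s := by
  have hfin : (Set.ofPred (· ∈ s.image (· j))).Finite := (s.image (· j)).finite_toSet
  calc rankCompress s k j < #hfin.toFinset := Nat.count_lt_card hfin (mem_image_of_mem (· j) hk)
    _ = #(s.image (· j)) := congrArg card (s.image (· j)).finite_toSet_toFinset
    _ ≤ #s := card_image_le

lemma rankCompress_injOn (s : Finset (ι → ℕ)) : Set.InjOn (rankCompress s) s :=
  fun _ hk _ hk' h => funext fun j =>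
    Nat.count_injective (mem_image_of_mem (· j) hk) (mem_image_of_mem (· j) hk') (congrFun h j)

lemma image_rankCompress_subset_piFinset [DecidableEq ι] [Fintype ι] (s : Finset (ι → ℕ)) :
    s.image (rankCompress s) ⊆ Fintype.piFinset fun _ => range #s := by
  intro x hx
  obtain ⟨k, hk, rfl⟩ := mem_image.1 hx
  exact Fintype.mem_piFinset.2 fun j => mem_range.2 (rankCompress_lt_card hk j)

end RankCompress

section Knapsack

variable {d : ℕ} {K₁ K₂ : ℝ} {e w : Fin d → ℕ → ℝ}

lemma knapsackValue_coe_finset (F : Finset (Fin d → ℕ)) :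
    knapsackValue K₁ e F = ENNReal.ofReal K₁ * ∑ k ∈ F, ∏ j, ENNReal.ofReal (e j (k j)) := by
  rw [knapsackValue]
  congr 1
  exact Finset.tsum_subtype F fun k => ∏ j, ENNReal.ofReal (e j (k j))

lemma knapsackWork_coe_finset (F : Finset (Fin d → ℕ)) :
    knapsackWork K₂ w F = ENNReal.ofReal K₂ * ∑ k ∈ F, ∏ j, ENNReal.ofReal (w j (k j)) := by
  rw [knapsackWork]
  congr 1
  exact Finset.tsum_subtype F fun k => ∏ j, ENNReal.ofReal (w j (k j))

lemma knapsackValue_coe_finset_ne_top (F : Finset (Fin d → ℕ)) :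
    knapsackValue K₁ e F ≠ ⊤ := by
  rw [knapsackValue_coe_finset]
  exact ENNReal.mul_ne_top ENNReal.ofReal_ne_top <| ENNReal.sum_ne_top.2 fun _ _ =>
    ENNReal.prod_ne_top fun _ _ => ENNReal.ofReal_ne_top

lemma ofReal_prod_apply_zero_le (hw₀ : ∀ j, 0 ≤ w j 0) (hw : ∀ j, Monotone (w j))
    (k : Fin d → ℕ) : ENNReal.ofReal (∏ j, w j 0) ≤ ∏ j, ENNReal.ofReal (w j (k j)) := by
  rw [ENNReal.ofReal_prod_of_nonneg fun j _ => hw₀ j]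
  exact prod_le_prod' fun j _ => ENNReal.ofReal_le_ofReal (hw j (Nat.zero_le _))

lemma finite_of_knapsackWork_ne_top (hK₂ : 0 < K₂) (hw₀ : ∀ j, 0 < w j 0)
    (hw : ∀ j, Monotone (w j)) {I : Set (Fin d → ℕ)} (hI : knapsackWork K₂ w I ≠ ⊤) :
    I.Finite := by
  have hsum : ∑' k : I, ∏ j, ENNReal.ofReal (w j ((k : Fin d → ℕ) j)) ≠ ⊤ :=
    (ENNReal.lt_top_of_mul_ne_top_right hI (by simpa using hK₂)).ne
  have hpos : ENNReal.ofReal (∏ j, w j 0) ≠ 0 := by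
    simpa using prod_pos fun j _ => hw₀ j
  have := ENNReal.finite_const_le_of_tsum_ne_top hsum hpos
  simpa [ofReal_prod_apply_zero_le (fun j => (hw₀ j).le) hw, Set.finite_univ_iff,
    Set.finite_coe_iff] using this

lemma card_le_of_knapsackWork_le (hK₂ : 0 < K₂) (hw₀ : ∀ j, 0 < w j 0)
    (hw : ∀ j, Monotone (w j)) {F : Finset (Fin d → ℕ)} {W : ℝ}
    (hF : knapsackWork K₂ w F ≤ ENNReal.ofReal W) : #F ≤ ⌈W / (K₂ * ∏ j, w j 0)⌉₊ := by
  set c := ∏ j, w j 0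
  have hc : 0 < K₂ * c := mul_pos hK₂ (prod_pos fun j _ => hw₀ j)
  have hcard : (#F : ℝ≥0∞) * ENNReal.ofReal (K₂ * c) ≤ ENNReal.ofReal W :=
    calc (#F : ℝ≥0∞) * ENNReal.ofReal (K₂ * c)
        = ENNReal.ofReal K₂ * (#F • ENNReal.ofReal c) := by
          rw [ENNReal.ofReal_mul hK₂.le, nsmul_eq_mul]; ring
      _ ≤ knapsackWork K₂ w F := by
          rw [knapsackWork_coe_finset]
          gcongr
          exact card_nsmul_le_sum F _ _ fun k _ =>
            ofReal_prod_apply_zero_le (fun j => (hw₀ j).le) hw k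
      _ ≤ ENNReal.ofReal W := hF
  rcases Nat.eq_zero_or_pos #F with h0 | hpos
  · simp [h0]
  rw [← ENNReal.le_div_iff_mul_le (.inl (by simpa using hc)) (.inl ENNReal.ofReal_ne_top),
    ← ENNReal.ofReal_div_of_pos hc, ENNReal.natCast_le_ofReal hpos.ne'] at hcard
  exact_mod_cast hcard.trans (Nat.le_ceil _)

lemma knapsackWork_image_le (hw : ∀ j, Monotone (w j)) {F : Finset (Fin d → ℕ)}
    {φ : (Fin d → ℕ) → Fin d → ℕ} (hφ : Set.InjOn φ F) (hφle : ∀ k, φ k ≤ k) :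
    knapsackWork K₂ w (F.image φ : Set (Fin d → ℕ)) ≤ knapsackWork K₂ w F := by
  rw [knapsackWork_coe_finset, knapsackWork_coe_finset, sum_image hφ]
  gcongr with k _ j
  exact hw j (hφle k j)

lemma knapsackValue_le_image (he : ∀ j, Antitone (e j)) {F : Finset (Fin d → ℕ)}
    {φ : (Fin d → ℕ) → Fin d → ℕ} (hφ : Set.InjOn φ F) (hφle : ∀ k, φ k ≤ k) :
    knapsackValue K₁ e F ≤ knapsackValue K₁ e (F.image φ : Set (Fin d → ℕ)) := by
  rw [knapsackValue_coe_finset, knapsackValue_coe_finset, sum_image hφ]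
  gcongr with k _ j
  exact he j (hφle k j)

end Knapsack

theorem knapsack_has_solution_general
    {d : ℕ} (e w : Fin d → ℕ → ℝ)
    (heanti : ∀ j, StrictAnti (e j))
    (hwpos : ∀ j i, 0 < w j i) (hwmono : ∀ j, Monotone (w j))
    (K₁ K₂ W : ℝ) (hK₂ : 0 < K₂) :
    ∃ Istar : Set (Fin d → ℕ),
      knapsackWork K₂ w Istar ≤ ENNReal.ofReal W ∧
      knapsackValue K₁ e Istar ≠ ⊤ ∧
      ∀ I : Set (Fin d → ℕ), knapsackWork K₂ w I ≤ ENNReal.ofReal W →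
        knapsackValue K₁ e I ≤ knapsackValue K₁ e Istar := by
  classical
  have hw₀ : ∀ j, 0 < w j 0 := fun j => hwpos j 0
  set N := ⌈W / (K₂ * ∏ j, w j 0)⌉₊
  set candidates : Finset (Finset (Fin d → ℕ)) :=
    (Fintype.piFinset fun _ => range N).powerset.filter
      fun F => knapsackWork K₂ w F ≤ ENNReal.ofReal W
  obtain ⟨Istar, hIstar, hmax⟩ := candidates.exists_max_image (fun F => knapsackValue K₁ e F)
    ⟨∅, by simp [candidates, knapsackWork_coe_finset]⟩
  refine ⟨Istar, (mem_filter.1 hIstar).2, knapsackValue_coe_finset_ne_top Istar, fun I hI => ?_⟩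
  obtain ⟨F, rfl⟩ := (finite_of_knapsackWork_ne_top hK₂ hw₀ hwmono
    (ne_top_of_le_ne_top ENNReal.ofReal_ne_top hI)).exists_finset_coe
  have hFN : #F ≤ N := card_le_of_knapsackWork_le hK₂ hw₀ hwmono hI
  have hbox : F.image (rankCompress F) ⊆ Fintype.piFinset fun _ => range N :=
    (image_rankCompress_subset_piFinset F).trans
      (Fintype.piFinset_subset _ _ fun _ => range_subset_range.2 hFN)
  have hmem : F.image (rankCompress F) ∈ candidates := mem_filter.2 ⟨mem_powerset.2 hbox,
    (knapsackWork_image_le hwmono (rankCompress_injOn F) (rankCompress_le F)).trans hI⟩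
  exact (knapsackValue_le_image (fun j => (heanti j).antitone) (rankCompress_injOn F)
    (rankCompress_le F)).trans (hmax _ hmem)

/-- the knapsack problem has a (not necessarily unique) solution:
the supremum of `|I|_e` over all `I ⊆ ℕ^d` with `|I|_w ≤ W` is finite and is
attained by some subset `I*` with `|I*|_w ≤ W`. -/
theorem knapsack_has_solution
    {d : ℕ} (hd : 1 ≤ d) (e w : Fin d → ℕ → ℝ)
    (hepos : ∀ j i, 0 < e j i) (heanti : ∀ j, StrictAnti (e j))
    (hwpos : ∀ j i, 0 < w j i) (hwmono : ∀ j, Monotone (w j))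
    (K₁ K₂ W : ℝ) (hK₁ : 0 < K₁) (hK₂ : 0 < K₂) (hW : 0 < W) :
    ∃ Istar : Set (Fin d → ℕ),
      knapsackWork K₂ w Istar ≤ ENNReal.ofReal W ∧
      knapsackValue K₁ e Istar ≠ ⊤ ∧
      ∀ I : Set (Fin d → ℕ), knapsackWork K₂ w I ≤ ENNReal.ofReal W →
        knapsackValue K₁ e I ≤ knapsackValue K₁ e Istar :=
  knapsack_has_solution_general e w heanti hwpos hwmono K₁ K₂ W hK₂
end

section
/- (Quasi-optimality of Dantzig's threshold sets) For δ > 0 let I_δ := {k ∈ ℕ^d : ∏_{j=1}^d e_j(k_j)/w_j(k_j) > δ}. If δ(W) > 0 is minimal with the property |I_{δ(W)}|_w ≤ W (i.e., |I_{δ(W)}|_w ≤ W and |I_{δ'}|_w > W for every 0 < δ' < δ(W)), then |I_{δ(W)}|_e ≥ (|I_{δ(W)}|_w / W) · E*(W). In particular, if |I_{δ(W)}|_w = W then I_{δ(W)} is a solution of the knapsack problem. -/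
open scoped ENNReal

/-- Dantzig's threshold set `I_δ := {k : ∏_j e_j(k_j)/w_j(k_j) > δ}`. -/
def dantzigSet {d : ℕ} (e w : Fin d → ℕ → ℝ) (δ : ℝ) : Set (Fin d → ℕ) :=
  {k | δ < ∏ j, e j (k j) / w j (k j)}

/-! With `f = ∏ e_j`, `g = ∏ w_j` and `A = I_δ`, every `k ∈ A` has `δ g k ≤ f k` and every
`k ∉ A` has `f k ≤ δ g k`, so for each `I` the exchange inequality
`|I|_e + δ |A|_w ≤ |A|_e + δ |I|_w` holds termwise. Multiplying it by `|A|_w` and using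
`|I|_w ≤ W`, `|A|_w ≤ W` and `δ |A|_w ≤ |A|_e` gives `|A|_w |I|_e ≤ W |A|_e`. -/

namespace ENNReal

theorem mul_mul_le_mul_of_exchange {c x y δ F V W : ℝ≥0∞} (hc : c ≠ ∞) (hδ : δ ≠ ∞)
    (hW : W ≠ ∞) (hx : c * x ≤ W) (hy : c * y ≤ W) (hV : δ * x ≤ V)
    (hF : F + δ * x ≤ V + δ * y) : c * x * F ≤ W * V := by
  rcases eq_or_ne c 0 with rfl | hc0
  · simp
  rcases eq_or_ne V ∞ with rfl | hVtop
  · rcases eq_or_ne W 0 with rfl | hW0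
    · simp [nonpos_iff_eq_zero.1 hx]
    · simp [mul_top hW0]
  have hx' : x ≠ ∞ := fun h => hW (top_unique (by simpa [h, mul_top hc0] using hx))
  have hy' : y ≠ ∞ := fun h => hW (top_unique (by simpa [h, mul_top hc0] using hy))
  have hF' : F ≠ ∞ := ne_top_of_le_ne_top (add_ne_top.2 ⟨hVtop, mul_ne_top hδ hy'⟩)
    (le_self_add.trans hF)
  lift c to NNReal using hc
  lift x to NNReal using hx'
  lift y to NNReal using hy'
  lift δ to NNReal using hδ
  lift F to NNReal using hF'
  lift V to NNReal using hVtop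
  lift W to NNReal using hW
  norm_cast at *
  rw [← NNReal.coe_le_coe] at *
  push_cast at *
  -- `W V - c x F` is the sum of these three nonnegative products
  nlinarith [mul_nonneg (mul_nonneg c.coe_nonneg x.coe_nonneg) (sub_nonneg.2 hF),
    mul_nonneg (mul_nonneg δ.coe_nonneg x.coe_nonneg) (sub_nonneg.2 hy),
    mul_nonneg (sub_nonneg.2 hx) (sub_nonneg.2 hV)]

end ENNReal

section Threshold

variable {α : Type*} {f g : α → ℝ≥0∞} {A : Set α} {δ : ℝ≥0∞}

theorem tsum_add_mul_tsum_le_of_threshold (hA : ∀ k ∈ A, δ * g k ≤ f k)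
    (hAc : ∀ k ∉ A, f k ≤ δ * g k) (S : Set α) :
    ∑' k : S, f k + δ * ∑' k : A, g k ≤ ∑' k : A, f k + δ * ∑' k : S, g k := by
  simp only [tsum_subtype, ← ENNReal.tsum_mul_left, ← ENNReal.tsum_add]
  refine ENNReal.tsum_le_tsum fun k => ?_
  by_cases hkS : k ∈ S <;> by_cases hkA : k ∈ A <;>
    simp [hkS, hkA, hA k, hAc k]

theorem mul_tsum_mul_tsum_le_of_threshold (hA : ∀ k ∈ A, δ * g k ≤ f k)
    (hAc : ∀ k ∉ A, f k ≤ δ * g k) {c W : ℝ≥0∞} (hc : c ≠ ∞) (hδ : δ ≠ ∞) (hW : W ≠ ∞)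
    (hAW : c * ∑' k : A, g k ≤ W) {I : Set α} (hIW : c * ∑' k : I, g k ≤ W) :
    (c * ∑' k : A, g k) * ∑' k : I, f k ≤ W * ∑' k : A, f k :=
  ENNReal.mul_mul_le_mul_of_exchange hc hδ hW hAW hIW
    (by simpa using tsum_add_mul_tsum_le_of_threshold hA hAc ∅)
    (tsum_add_mul_tsum_le_of_threshold hA hAc I)

end Threshold

theorem ofReal_mul_prod_le_prod_of_mem_dantzigSet {d : ℕ} {e w : Fin d → ℕ → ℝ}
    (hepos : ∀ j i, 0 < e j i) (hwpos : ∀ j i, 0 < w j i) {δ : ℝ} (hδ : 0 ≤ δ)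
    {k : Fin d → ℕ} (hk : k ∈ dantzigSet e w δ) :
    ENNReal.ofReal δ * ∏ j, ENNReal.ofReal (w j (k j)) ≤ ∏ j, ENNReal.ofReal (e j (k j)) := by
  have hw : 0 < ∏ j, w j (k j) := Finset.prod_pos fun j _ => hwpos j (k j)
  rw [← ENNReal.ofReal_prod_of_nonneg fun j _ => (hepos j (k j)).le,
    ← ENNReal.ofReal_prod_of_nonneg fun j _ => (hwpos j (k j)).le, ← ENNReal.ofReal_mul hδ]
  refine ENNReal.ofReal_le_ofReal ?_
  have : δ < (∏ j, e j (k j)) / ∏ j, w j (k j) := by rwa [← Finset.prod_div_distrib]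
  exact ((lt_div_iff₀ hw).1 this).le

theorem prod_le_ofReal_mul_prod_of_notMem_dantzigSet {d : ℕ} {e w : Fin d → ℕ → ℝ}
    (hepos : ∀ j i, 0 < e j i) (hwpos : ∀ j i, 0 < w j i) {δ : ℝ} (hδ : 0 ≤ δ)
    {k : Fin d → ℕ} (hk : k ∉ dantzigSet e w δ) :
    ∏ j, ENNReal.ofReal (e j (k j)) ≤ ENNReal.ofReal δ * ∏ j, ENNReal.ofReal (w j (k j)) := by
  have hw : 0 < ∏ j, w j (k j) := Finset.prod_pos fun j _ => hwpos j (k j)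
  rw [← ENNReal.ofReal_prod_of_nonneg fun j _ => (hepos j (k j)).le,
    ← ENNReal.ofReal_prod_of_nonneg fun j _ => (hwpos j (k j)).le, ← ENNReal.ofReal_mul hδ]
  refine ENNReal.ofReal_le_ofReal ?_
  have : (∏ j, e j (k j)) / ∏ j, w j (k j) ≤ δ := by
    rw [← Finset.prod_div_distrib]; exact not_lt.1 hk
  exact (div_le_iff₀ hw).1 this

theorem dantzig_set_quasi_optimal_general
    {d : ℕ} (e w : Fin d → ℕ → ℝ)
    (hepos : ∀ j i, 0 < e j i)
    (hwpos : ∀ j i, 0 < w j i)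
    (K₁ K₂ W : ℝ) (hW : 0 < W)
    (δW : ℝ) (hδW : 0 < δW)
    (hfeas : knapsackWork K₂ w (dantzigSet e w δW) ≤ ENNReal.ofReal W) :
    (∀ I : Set (Fin d → ℕ), knapsackWork K₂ w I ≤ ENNReal.ofReal W →
      knapsackWork K₂ w (dantzigSet e w δW) * knapsackValue K₁ e I ≤
        ENNReal.ofReal W * knapsackValue K₁ e (dantzigSet e w δW)) ∧
    (knapsackWork K₂ w (dantzigSet e w δW) = ENNReal.ofReal W →
      ∀ I : Set (Fin d → ℕ), knapsackWork K₂ w I ≤ ENNReal.ofReal W →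
        knapsackValue K₁ e I ≤ knapsackValue K₁ e (dantzigSet e w δW)) := by
  have quasi_optimal : ∀ I : Set (Fin d → ℕ), knapsackWork K₂ w I ≤ ENNReal.ofReal W →
      knapsackWork K₂ w (dantzigSet e w δW) * knapsackValue K₁ e I ≤
        ENNReal.ofReal W * knapsackValue K₁ e (dantzigSet e w δW) := by
    intro I hI
    have key := mul_tsum_mul_tsum_le_of_threshold
      (fun k hk => ofReal_mul_prod_le_prod_of_mem_dantzigSet hepos hwpos hδW.le hk)
      (fun k hk => prod_le_ofReal_mul_prod_of_notMem_dantzigSet hepos hwpos hδW.le hk)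
      ENNReal.ofReal_ne_top ENNReal.ofReal_ne_top ENNReal.ofReal_ne_top hfeas hI
    unfold knapsackValue
    calc _ = ENNReal.ofReal K₁ * (knapsackWork K₂ w (dantzigSet e w δW) * _) := by ring
      _ ≤ _ := mul_le_mul_right key _
      _ = _ := by ring
  refine ⟨quasi_optimal, fun heq I hI => ?_⟩
  have h := quasi_optimal I hI
  rw [heq] at h
  exact (ENNReal.mul_le_mul_iff_right (ENNReal.ofReal_pos.2 hW).ne' ENNReal.ofReal_ne_top).1 h

/-- quasi-optimality of Dantzig's threshold sets: if `δ(W) > 0` is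
minimal with `|I_{δ(W)}|_w ≤ W`, then `|I_{δ(W)}|_e ≥ (|I_{δ(W)}|_w / W) ⬝ E*(W)`,
stated multiplicatively as `|I_{δ(W)}|_w ⬝ |I|_e ≤ W ⬝ |I_{δ(W)}|_e` for every
feasible `I`; in particular, if `|I_{δ(W)}|_w = W` then `I_{δ(W)}` solves the
knapsack problem. -/
theorem dantzig_set_quasi_optimal
    {d : ℕ} (hd : 1 ≤ d) (e w : Fin d → ℕ → ℝ)
    (hepos : ∀ j i, 0 < e j i) (heanti : ∀ j, StrictAnti (e j))
    (hwpos : ∀ j i, 0 < w j i) (hwmono : ∀ j, Monotone (w j))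
    (K₁ K₂ W : ℝ) (hK₁ : 0 < K₁) (hK₂ : 0 < K₂) (hW : 0 < W)
    (δW : ℝ) (hδW : 0 < δW)
    (hfeas : knapsackWork K₂ w (dantzigSet e w δW) ≤ ENNReal.ofReal W)
    (hmin : ∀ δ' : ℝ, 0 < δ' → δ' < δW →
      ¬ knapsackWork K₂ w (dantzigSet e w δ') ≤ ENNReal.ofReal W) :
    (∀ I : Set (Fin d → ℕ), knapsackWork K₂ w I ≤ ENNReal.ofReal W →
      knapsackWork K₂ w (dantzigSet e w δW) * knapsackValue K₁ e I ≤
        ENNReal.ofReal W * knapsackValue K₁ e (dantzigSet e w δW)) ∧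
    (knapsackWork K₂ w (dantzigSet e w δW) = ENNReal.ofReal W →
      ∀ I : Set (Fin d → ℕ), knapsackWork K₂ w I ≤ ENNReal.ofReal W →
        knapsackValue K₁ e I ≤ knapsackValue K₁ e (dantzigSet e w δW)) :=
  dantzig_set_quasi_optimal_general e w hepos hwpos K₁ K₂ W hW δW hδW hfeas
end

section
/- (Combination coefficients for the simplex) Let d ≥ 1, L ∈ ℕ, and I := {k ∈ ℕ^d : |k|_1 ≤ L} where |k|_1 := k_1 + ⋯ + k_d. Then the combination coefficients c_k := Σ_{e ∈ {0,1}^d : k+e ∈ I} (−1)^{|e|_1} satisfy c_k = (−1)^{L−|k|_1} · binomial(d−1, L−|k|_1) if L−d+1 ≤ |k|_1 ≤ L, and c_k = 0 for all other k ∈ ℕ^d. -/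
/-! Whether `k + e` lies in the simplex depends on `e` only through `|e|₁`, so `c_k` is the
truncated alternating binomial sum `∑_{i ≤ L - |k|₁} (-1)^i C(d, i)`, which Pascal's rule
telescopes to `(-1)^(L - |k|₁) C(d - 1, L - |k|₁)`; this vanishes once `L - |k|₁ ≥ d`. -/

open Finset

def Finset.equivFunBool (ι : Type*) [Fintype ι] [DecidableEq ι] : Finset ι ≃ (ι → Bool) where
  toFun s j := decide (j ∈ s)
  invFun e := univ.filter fun j => e j = true
  left_inv s := by ext; simp
  right_inv e := by ext; simp

theorem Fintype.sum_funBool_apply_card {ι M : Type*} [Fintype ι] [DecidableEq ι]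
    [AddCommMonoid M] (g : ℕ → M) :
    ∑ e : ι → Bool, g #{j | e j = true} =
      ∑ i ∈ range (Fintype.card ι + 1), (Fintype.card ι).choose i • g i := by
  rw [← (Finset.equivFunBool ι).sum_comp, ← card_univ, ← sum_powerset_apply_card, powerset_univ]
  refine Finset.sum_congr rfl fun s _ => ?_
  congr 2
  ext j
  simp [Finset.equivFunBool]

theorem Fintype.sum_funBool_truncated_neg_one_pow_card {ι : Type*} [Fintype ι] [DecidableEq ι]
    {n : ℕ} (hι : Fintype.card ι = n + 1) (m : ℕ) :
    (∑ e : ι → Bool, if #{j | e j = true} ≤ m then (-1 : ℤ) ^ #{j | e j = true} else 0) =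
      (-1) ^ m * n.choose m := by
  rw [Fintype.sum_funBool_apply_card (fun i => if i ≤ m then (-1 : ℤ) ^ i else 0), hι,
    ← Int.alternating_sum_range_choose_eq_choose]
  have hle : ∀ i, i ≤ m ↔ i ∈ range (m + 1) := fun i => by simp
  simp only [hle, nsmul_eq_mul, mul_ite, mul_zero]
  rw [Finset.sum_ite_mem, Finset.sum_subset inter_subset_right fun i hi hi' => ?_]
  · exact Finset.sum_congr rfl fun i _ => mul_comm _ _
  have hn : n + 1 < i := by simp_all
  simp [Nat.choose_eq_zero_of_lt hn]

/-- combination coefficients for the simplex: for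
`I = {k ∈ ℕ^d : |k|₁ ≤ L}`, the combination coefficients
`c_k = ∑_{e ∈ {0,1}^d, k+e ∈ I} (-1)^{|e|₁}` are given by
`c_k = (-1)^{L-|k|₁} C(d-1, L-|k|₁)` if `L-d+1 ≤ |k|₁ ≤ L` and `c_k = 0` otherwise. -/
theorem combination_coefficients_simplex
    {d : ℕ} (hd : 1 ≤ d) (L : ℕ) (k : Fin d → ℕ) :
    (∑ e : Fin d → Bool,
      if (∑ j, (k j + if e j then 1 else 0)) ≤ L
      then (-1 : ℤ) ^ (Finset.univ.filter fun j => e j = true).card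
      else 0) =
    (if (∑ j, k j) ≤ L ∧ L + 1 ≤ (∑ j, k j) + d
      then (-1 : ℤ) ^ (L - ∑ j, k j) * (Nat.choose (d - 1) (L - ∑ j, k j) : ℤ)
      else 0) := by
  obtain ⟨n, rfl⟩ : ∃ n, d = n + 1 := ⟨d - 1, by omega⟩
  set s := ∑ j, k j
  have hsum : ∀ e : Fin (n + 1) → Bool,
      ∑ j, (k j + if e j then 1 else 0) = s + #{j | e j = true} := fun e => by
    simp [sum_add_distrib, sum_boole, s]
  simp_rw [hsum]
  by_cases hsL : s ≤ L
  · have hshift : ∀ c, s + c ≤ L ↔ c ≤ L - s := fun c => by omega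
    simp_rw [hshift]
    rw [Fintype.sum_funBool_truncated_neg_one_pow_card (Fintype.card_fin _), Nat.add_sub_cancel]
    by_cases hLs : L + 1 ≤ s + (n + 1)
    · rw [if_pos ⟨hsL, hLs⟩]
    · rw [if_neg (by omega), Nat.choose_eq_zero_of_lt (by omega), Nat.cast_zero, mul_zero]
  · rw [if_neg (by omega)]
    exact sum_eq_zero fun e _ => if_neg (by omega)
end

section
/- (Exponential sum bound, work estimate) Let d ≥ 1, β_j > 0, γ_j > 0, γ'_j ≥ 0 for j = 1,…,d, set ρ := max_{1≤j≤d} γ_j/β_j, J := {j : γ_j/β_j = ρ}, d* := |J|, and γ'* := Σ_{j∈J} γ'_j. Then there exists a constant C > 0, depending only on β, γ, γ', and d, such that for all L ≥ 0: Σ_{k ∈ ℕ^d : Σ_j (β_j+γ_j)k_j ≤ L} exp(Σ_j γ_j k_j) ∏_{j=1}^d (k_j+1)^{γ'_j} ≤ C exp(ρL/(1+ρ)) (L+1)^{d*−1+γ'*}. -/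
/-!
Write `a j = β j + γ j` and `θ = ρ / (1 + ρ)`. Then `γ j = θ * a j - c j` with `c j ≥ 0`, and
`c j = 0` exactly for `j ∈ J`. Fix `j₀ ∈ J`. For fixed values of the other coordinates, the sum
over `k j₀` is geometric with ratio `exp (θ * a j₀) > 1`, hence at most a constant times its
largest term; combined with the factor `exp (θ * ∑_{j ≠ j₀} a j * k j)` this is `O(exp (θ * L))`.
What remains factorises over `j ≠ j₀`: a coordinate with `c j > 0` contributes a convergent
series `∑ n, exp (-c j * n) * (n + 1) ^ γ' j`, a coordinate of `J \ {j₀}` at most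
`O((L + 1) ^ (1 + γ' j))`, and the polynomial weight of `k j₀` itself `O((L + 1) ^ γ' j₀)`.
-/

open Finset Real

theorem geom_sum_range_succ_le {q : ℝ} (hq : 1 < q) (m : ℕ) :
    ∑ x ∈ range (m + 1), q ^ x ≤ q / (q - 1) * q ^ m := by
  rw [geom_sum_eq hq.ne', div_mul_eq_mul_div, ← pow_succ']
  exact div_le_div_of_nonneg_right (by linarith) (by linarith)

theorem sum_filter_exp_mul_le {a θ : ℝ} (ha : 0 < a) (hθ : 0 < θ) (M : ℝ) (T : Finset ℕ) :
    ∑ x ∈ T.filter (fun x : ℕ => a * x ≤ M), exp (θ * (a * x)) ≤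
      exp (θ * a) / (exp (θ * a) - 1) * exp (θ * M) := by
  have hq : 1 < exp (θ * a) := one_lt_exp_iff.2 (by positivity)
  have hq' : 0 < exp (θ * a) - 1 := by linarith
  rcases lt_or_ge M 0 with hM | hM
  · have hempty : T.filter (fun x : ℕ => a * x ≤ M) = ∅ :=
      filter_eq_empty_iff.2 fun x _ => by
        have : 0 ≤ a * x := by positivity
        linarith
    rw [hempty, sum_empty]
    positivity
  set m := ⌊M / a⌋₊
  have hle : ∀ x : ℕ, a * x ≤ M ↔ x ≤ m := fun x => by
    rw [Nat.le_floor_iff (by positivity), le_div_iff₀ ha, mul_comm]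
  have hsub : T.filter (fun x : ℕ => a * x ≤ M) ⊆ range (m + 1) := fun x hx =>
    mem_range_succ_iff.2 ((hle x).1 (mem_filter.1 hx).2)
  calc ∑ x ∈ T.filter (fun x : ℕ => a * x ≤ M), exp (θ * (a * x))
      = ∑ x ∈ T.filter (fun x : ℕ => a * x ≤ M), exp (θ * a) ^ x :=
        sum_congr rfl fun x _ => by rw [← exp_nat_mul]; ring_nf
    _ ≤ ∑ x ∈ range (m + 1), exp (θ * a) ^ x :=
        sum_le_sum_of_subset_of_nonneg hsub fun _ _ _ => by positivity
    _ ≤ exp (θ * a) / (exp (θ * a) - 1) * exp (θ * a) ^ m := geom_sum_range_succ_le hq m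
    _ ≤ exp (θ * a) / (exp (θ * a) - 1) * exp (θ * M) := by
        rw [← exp_nat_mul]
        refine mul_le_mul_of_nonneg_left (exp_le_exp.2 ?_) (by positivity)
        nlinarith [(hle m).2 le_rfl]

theorem natCast_add_one_le_of_mul_le {a L : ℝ} (ha : 0 < a) (hL : 0 ≤ L) {n : ℕ}
    (hn : a * n ≤ L) : (n : ℝ) + 1 ≤ (1 + a⁻¹) * (L + 1) := by
  have : (n : ℝ) ≤ a⁻¹ * L := by rw [← div_eq_inv_mul, le_div_iff₀ ha]; linarith
  nlinarith [inv_pos.2 ha]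

theorem summable_exp_neg_mul_mul_rpow {c : ℝ} (hc : 0 < c) (p : ℝ) :
    Summable fun n : ℕ => exp (-c * n) * ((n : ℝ) + 1) ^ p := by
  set r := exp (-c)
  have hr : ‖r‖ < 1 := by
    rw [Real.norm_of_nonneg (exp_pos _).le, exp_lt_one_iff]; linarith
  have hshift : Summable fun n : ℕ => ((n + 1 : ℕ) : ℝ) ^ ⌈p⌉₊ * r ^ (n + 1) :=
    (summable_nat_add_iff 1 (f := fun n : ℕ => (n : ℝ) ^ ⌈p⌉₊ * r ^ n)).2
      (summable_pow_mul_geometric_of_norm_lt_one ⌈p⌉₊ hr)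
  refine (hshift.mul_left r⁻¹).of_nonneg_of_le (fun n => by positivity) fun n => ?_
  have hpow : ((n : ℝ) + 1) ^ p ≤ ((n : ℝ) + 1) ^ ⌈p⌉₊ := by
    rw [← rpow_natCast]
    exact rpow_le_rpow_of_exponent_le (by linarith [n.cast_nonneg (α := ℝ)]) (Nat.le_ceil p)
  have hr0 : r ≠ 0 := (exp_pos _).ne'
  calc exp (-c * n) * ((n : ℝ) + 1) ^ p ≤ r ^ n * ((n : ℝ) + 1) ^ ⌈p⌉₊ := by
        rw [mul_comm (-c), exp_nat_mul]
        exact mul_le_mul_of_nonneg_left hpow (by positivity)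
    _ = r⁻¹ * (((n + 1 : ℕ) : ℝ) ^ ⌈p⌉₊ * r ^ (n + 1)) := by
        rw [pow_succ, Nat.cast_succ]
        field_simp

theorem exists_sum_range_exp_neg_mul_mul_rpow_le {a c p : ℝ} (ha : 0 < a) (hc : 0 ≤ c)
    (hp : 0 ≤ p) : ∃ E > 0, ∀ L, 0 ≤ L →
      ∑ n ∈ range (⌊L / a⌋₊ + 1), exp (-c * n) * ((n : ℝ) + 1) ^ p ≤
        E * (L + 1) ^ (if c = 0 then 1 + p else 0) := by
  rcases hc.eq_or_lt with rfl | hc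
  · refine ⟨(1 + a⁻¹) ^ (1 + p), by positivity, fun L hL => ?_⟩
    set X := (1 + a⁻¹) * (L + 1)
    have hmem : ∀ n ∈ range (⌊L / a⌋₊ + 1), a * n ≤ L := fun n hn => by
      have := (Nat.le_floor_iff (by positivity)).1 (mem_range_succ_iff.1 hn)
      rwa [le_div_iff₀ ha, mul_comm] at this
    have hcard : ((⌊L / a⌋₊ + 1 : ℕ) : ℝ) ≤ X := by
      push_cast
      exact natCast_add_one_le_of_mul_le ha hL (hmem _ (self_mem_range_succ _))
    calc ∑ n ∈ range (⌊L / a⌋₊ + 1), exp (-0 * n) * ((n : ℝ) + 1) ^ p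
        ≤ ∑ n ∈ range (⌊L / a⌋₊ + 1), X ^ p := sum_le_sum fun n hn => by
          rw [neg_zero, zero_mul, exp_zero, one_mul]
          exact rpow_le_rpow (by positivity) (natCast_add_one_le_of_mul_le ha hL (hmem n hn)) hp
      _ ≤ X * X ^ p := by
          rw [sum_const, card_range, nsmul_eq_mul]
          exact mul_le_mul_of_nonneg_right hcard (by positivity)
      _ = (1 + a⁻¹) ^ (1 + p) * (L + 1) ^ (if (0 : ℝ) = 0 then 1 + p else 0) := by
          rw [if_pos rfl, ← mul_rpow (by positivity) (by positivity), rpow_add (by positivity),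
            rpow_one]
  · have hsum := summable_exp_neg_mul_mul_rpow hc p
    refine ⟨∑' n : ℕ, exp (-c * n) * ((n : ℝ) + 1) ^ p,
      hsum.tsum_pos (fun n => by positivity) 0 (by simp), fun L _ => ?_⟩
    rw [if_neg hc.ne', rpow_zero, mul_one]
    exact hsum.sum_le_tsum _ fun n _ => by positivity

section

variable {ι : Type*} [Fintype ι]

theorem sum_prod_le_prod_sum_range_floor [DecidableEq ι] {a : ι → ℝ} (ha : ∀ j, 0 < a j)
    {L : ℝ} {w : ι → ℕ → ℝ} (hw : ∀ j n, 0 ≤ w j n) {S : Finset (ι → ℕ)}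
    (hS : ∀ y ∈ S, ∑ j, a j * y j ≤ L) :
    ∑ y ∈ S, ∏ j, w j (y j) ≤ ∏ j, ∑ n ∈ range (⌊L / a j⌋₊ + 1), w j n := by
  rw [prod_univ_sum]
  refine sum_le_sum_of_subset_of_nonneg (fun y hy => ?_) fun y _ _ =>
    prod_nonneg fun j _ => hw j (y j)
  refine Fintype.mem_piFinset.2 fun j => mem_range_succ_iff.2 (Nat.le_floor ?_)
  have hsingle : a j * y j ≤ ∑ i, a i * y i :=
    single_le_sum (f := fun i => a i * y i)
      (fun i _ => mul_nonneg (ha i).le (Nat.cast_nonneg _)) (mem_univ j)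
  rw [le_div_iff₀ (ha j)]
  linarith [hS y hy]

@[to_additive]
theorem prod_funSplitAt_symm [DecidableEq ι] {M : Type*} [CommMonoid M] (f : ι → ℕ → M)
    (j₀ : ι) (x : ℕ) (y : {j // j ≠ j₀} → ℕ) :
    ∏ j, f j ((Equiv.funSplitAt j₀ ℕ).symm (x, y) j) =
      f j₀ x * ∏ j : {j // j ≠ j₀}, f j (y j) := by
  rw [Fintype.prod_eq_mul_prod_subtype_ne _ j₀]
  congr 1
  · simp [Equiv.funSplitAt_symm_apply]
  · exact prod_congr rfl fun j _ => by simp [Equiv.funSplitAt_symm_apply, j.2]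

noncomputable def truncExpWeight (a : ι → ℝ) (θ L : ℝ) (w : ι → ℕ → ℝ) (k : ι → ℕ) : ℝ :=
  if ∑ j, a j * k j ≤ L then exp (θ * ∑ j, a j * k j) * ∏ j, w j (k j) else 0

variable {a : ι → ℝ} {θ L : ℝ} {w : ι → ℕ → ℝ} {j₀ : ι} {B : ℝ}

theorem sum_truncExpWeight_funSplitAt_symm_le [DecidableEq ι] (ha : ∀ j, 0 < a j) (hθ : 0 < θ)
    (hw : ∀ j n, 0 ≤ w j n) (hB : 0 ≤ B) (hwB : ∀ n : ℕ, a j₀ * n ≤ L → w j₀ n ≤ B)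
    (T : Finset ℕ) (y : {j // j ≠ j₀} → ℕ) :
    ∑ x ∈ T, truncExpWeight a θ L w ((Equiv.funSplitAt j₀ ℕ).symm (x, y)) ≤
      if ∑ j : {j // j ≠ j₀}, a j * y j ≤ L then
        exp (θ * a j₀) / (exp (θ * a j₀) - 1) * exp (θ * L) * B *
          ∏ j : {j // j ≠ j₀}, w j (y j)
      else 0 := by
  set A := ∑ j : {j // j ≠ j₀}, a j * (y j : ℝ)
  set W := ∏ j : {j // j ≠ j₀}, w j (y j)
  have hA : 0 ≤ A := sum_nonneg fun j _ => mul_nonneg (ha j).le (Nat.cast_nonneg _)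
  have hW : 0 ≤ W := prod_nonneg fun j _ => hw j (y j)
  have hsplit : ∀ x : ℕ, truncExpWeight a θ L w ((Equiv.funSplitAt j₀ ℕ).symm (x, y)) =
      if a j₀ * x + A ≤ L then exp (θ * (a j₀ * x + A)) * (w j₀ x * W) else 0 := fun x => by
    simp only [truncExpWeight, sum_funSplitAt_symm (fun j n => a j * (n : ℝ)),
      prod_funSplitAt_symm w, A, W]
  simp_rw [hsplit]
  split_ifs with hAL
  · calc ∑ x ∈ T, (if a j₀ * x + A ≤ L then exp (θ * (a j₀ * x + A)) * (w j₀ x * W) else 0)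
        ≤ ∑ x ∈ T, (if a j₀ * x ≤ L - A then exp (θ * (a j₀ * x)) else 0) *
            (B * exp (θ * A) * W) := by
          refine sum_le_sum fun x _ => ?_
          split_ifs with h₁ h₂
          · calc exp (θ * (a j₀ * x + A)) * (w j₀ x * W)
                = exp (θ * (a j₀ * x)) * (w j₀ x * exp (θ * A) * W) := by
                  rw [mul_add, exp_add]; ring
              _ ≤ exp (θ * (a j₀ * x)) * (B * exp (θ * A) * W) := by
                  gcongr
                  exact hwB x (by linarith)
          · exact absurd (by linarith) h₂
          · exact mul_nonneg (exp_pos _).le (mul_nonneg (mul_nonneg hB (exp_pos _).le) hW)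
          · simp
      _ = (∑ x ∈ T.filter (fun x : ℕ => a j₀ * x ≤ L - A), exp (θ * (a j₀ * x))) *
            (B * exp (θ * A) * W) := by rw [sum_filter, sum_mul]
      _ ≤ exp (θ * a j₀) / (exp (θ * a j₀) - 1) * exp (θ * (L - A)) *
            (B * exp (θ * A) * W) := by
          gcongr
          exact sum_filter_exp_mul_le (ha j₀) hθ _ _
      _ = exp (θ * a j₀) / (exp (θ * a j₀) - 1) * exp (θ * L) * B * W := by
          rw [mul_sub, exp_sub]; field_simp
  · refine (sum_eq_zero fun x _ => if_neg fun h => hAL ?_).le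
    have : 0 ≤ a j₀ * x := mul_nonneg (ha j₀).le (Nat.cast_nonneg _)
    linarith

theorem truncExpWeight_nonneg (hw : ∀ j n, 0 ≤ w j n) (k : ι → ℕ) :
    0 ≤ truncExpWeight a θ L w k := by
  unfold truncExpWeight
  split_ifs
  · exact mul_nonneg (exp_pos _).le (prod_nonneg fun j _ => hw j (k j))
  · exact le_rfl

theorem sum_truncExpWeight_le [DecidableEq ι] (ha : ∀ j, 0 < a j) (hθ : 0 < θ)
    (hw : ∀ j n, 0 ≤ w j n) (hB : 0 ≤ B) (hwB : ∀ n : ℕ, a j₀ * n ≤ L → w j₀ n ≤ B)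
    (s : Finset (ι → ℕ)) :
    ∑ k ∈ s, truncExpWeight a θ L w k ≤
      exp (θ * a j₀) / (exp (θ * a j₀) - 1) * exp (θ * L) * B *
        ∏ j : {j // j ≠ j₀}, ∑ n ∈ range (⌊L / a j⌋₊ + 1), w j n := by
  set e := Equiv.funSplitAt j₀ ℕ
  set P := s.map e.toEmbedding
  have hK : 0 ≤ exp (θ * a j₀) / (exp (θ * a j₀) - 1) * exp (θ * L) * B := by
    have : 1 < exp (θ * a j₀) := one_lt_exp_iff.2 (mul_pos hθ (ha j₀))
    have : 0 < exp (θ * a j₀) - 1 := by linarith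
    positivity
  calc ∑ k ∈ s, truncExpWeight a θ L w k = ∑ p ∈ P, truncExpWeight a θ L w (e.symm p) := by
        simp [P]
    _ ≤ ∑ p ∈ P.image Prod.fst ×ˢ P.image Prod.snd, truncExpWeight a θ L w (e.symm p) :=
        sum_le_sum_of_subset_of_nonneg subset_product fun _ _ _ => truncExpWeight_nonneg hw _
    _ = ∑ y ∈ P.image Prod.snd, ∑ x ∈ P.image Prod.fst, truncExpWeight a θ L w (e.symm (x, y)) :=
        sum_product_right _ _ _
    _ ≤ ∑ y ∈ P.image Prod.snd, if ∑ j : {j // j ≠ j₀}, a j * y j ≤ L then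
          exp (θ * a j₀) / (exp (θ * a j₀) - 1) * exp (θ * L) * B *
            ∏ j : {j // j ≠ j₀}, w j (y j) else 0 :=
        sum_le_sum fun y _ => sum_truncExpWeight_funSplitAt_symm_le ha hθ hw hB hwB _ y
    _ = exp (θ * a j₀) / (exp (θ * a j₀) - 1) * exp (θ * L) * B *
          ∑ y ∈ (P.image Prod.snd).filter (fun y => ∑ j : {j // j ≠ j₀}, a j * y j ≤ L),
            ∏ j : {j // j ≠ j₀}, w j (y j) := by
        rw [sum_filter, mul_sum]
        simp only [mul_ite, mul_zero]
    _ ≤ _ := mul_le_mul_of_nonneg_left (sum_prod_le_prod_sum_range_floor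
          (a := fun j : {j // j ≠ j₀} => a j) (fun j => ha j) (fun j => hw j)
          fun y hy => (mem_filter.1 hy).2) hK

theorem exists_tsum_ite_exp_mul_prod_rpow_le [DecidableEq ι] {a c p : ι → ℝ}
    (ha : ∀ j, 0 < a j) (hc : ∀ j, 0 ≤ c j) (hp : ∀ j, 0 ≤ p j) {θ : ℝ} (hθ : 0 < θ) {j₀ : ι}
    (hj₀ : c j₀ = 0) :
    ∃ C > 0, ∀ L, 0 ≤ L →
      ∑' k : ι → ℕ, (if ∑ j, a j * k j ≤ L
        then exp (∑ j, (θ * a j - c j) * k j) * ∏ j, ((k j : ℝ) + 1) ^ p j else 0) ≤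
      C * exp (θ * L) * (L + 1) ^ (∑ j, (if c j = 0 then 1 + p j else 0) - 1) := by
  choose E hE0 hE using fun j => exists_sum_range_exp_neg_mul_mul_rpow_le (ha j) (hc j) (hp j)
  have hq : 0 < exp (θ * a j₀) - 1 := by
    linarith [one_lt_exp_iff.2 (mul_pos hθ (ha j₀))]
  have hC : 0 < exp (θ * a j₀) / (exp (θ * a j₀) - 1) * (1 + (a j₀)⁻¹) ^ p j₀ *
      ∏ j : {j // j ≠ j₀}, E j :=
    mul_pos (by have := ha j₀; positivity) (prod_pos fun j _ => hE0 j)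
  refine ⟨_, hC, fun L hL => ?_⟩
  set q : ι → ℝ := fun j => if c j = 0 then 1 + p j else 0
  set w : ι → ℕ → ℝ := fun j n => exp (-c j * n) * ((n : ℝ) + 1) ^ p j
  have hsummand : ∀ k : ι → ℕ, (if ∑ j, a j * k j ≤ L
      then exp (∑ j, (θ * a j - c j) * k j) * ∏ j, ((k j : ℝ) + 1) ^ p j else 0) =
        truncExpWeight a θ L w k := fun k => by
    simp only [truncExpWeight, w, prod_mul_distrib, ← exp_sum, ← mul_assoc, ← exp_add, mul_sum,
      ← sum_add_distrib, sub_eq_add_neg, add_mul, neg_mul]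
  have hwB : ∀ n : ℕ, a j₀ * n ≤ L → w j₀ n ≤ (1 + (a j₀)⁻¹) ^ p j₀ * (L + 1) ^ p j₀ :=
    fun n hn => by
      rw [← mul_rpow (by have := ha j₀; positivity) (by positivity)]
      simp only [w, hj₀, neg_zero, zero_mul, exp_zero, one_mul]
      exact rpow_le_rpow (by positivity) (natCast_add_one_le_of_mul_le (ha j₀) hL hn) (hp j₀)
  have hexp : p j₀ + ∑ j : {j // j ≠ j₀}, q j = ∑ j, q j - 1 := by
    rw [Fintype.sum_eq_add_sum_subtype_ne q j₀, show q j₀ = 1 + p j₀ from if_pos hj₀]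
    ring
  simp_rw [hsummand]
  refine tsum_le_of_sum_le' (by positivity) fun s => ?_
  calc ∑ k ∈ s, truncExpWeight a θ L w k
      ≤ exp (θ * a j₀) / (exp (θ * a j₀) - 1) * exp (θ * L) *
          ((1 + (a j₀)⁻¹) ^ p j₀ * (L + 1) ^ p j₀) *
          ∏ j : {j // j ≠ j₀}, ∑ n ∈ range (⌊L / a j⌋₊ + 1), w j n :=
        sum_truncExpWeight_le ha hθ (fun j n => by positivity) (by have := ha j₀; positivity) hwB s
    _ ≤ exp (θ * a j₀) / (exp (θ * a j₀) - 1) * exp (θ * L) *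
          ((1 + (a j₀)⁻¹) ^ p j₀ * (L + 1) ^ p j₀) *
          ∏ j : {j // j ≠ j₀}, (E j * (L + 1) ^ q j) := by
        have := ha j₀
        gcongr with j
        exact hE j L hL
    _ = _ := by
        rw [prod_mul_distrib, ← rpow_sum_of_pos (by positivity), ← hexp,
          rpow_add (by positivity)]
        ring

end

theorem exponential_sum_work_bound_general
    {d : ℕ} (β γ γ' : Fin d → ℝ)
    (hβ : ∀ j, 0 < β j) (hγ : ∀ j, 0 < γ j) (hγ' : ∀ j, 0 ≤ γ' j)
    (ρ : ℝ) (hρmem : ∃ j, γ j / β j = ρ) (hρub : ∀ j, γ j / β j ≤ ρ) :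
    ∃ C > (0 : ℝ), ∀ L : ℝ, 0 ≤ L →
      (∑' k : Fin d → ℕ,
        if ∑ j, (β j + γ j) * (k j : ℝ) ≤ L
        then Real.exp (∑ j, γ j * (k j : ℝ)) * ∏ j, ((k j : ℝ) + 1) ^ (γ' j)
        else 0) ≤
      C * Real.exp (ρ / (1 + ρ) * L) *
        (L + 1) ^
          (((Finset.univ.filter fun j => γ j / β j = ρ).card : ℝ) - 1 +
            ∑ j ∈ Finset.univ.filter fun j => γ j / β j = ρ, γ' j) := by
  obtain ⟨j₀, hj₀⟩ := hρmem
  have hρ : 0 < ρ := hj₀ ▸ div_pos (hγ j₀) (hβ j₀)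
  set c : Fin d → ℝ := fun j => (ρ - γ j / β j) * β j / (1 + ρ)
  have hc : ∀ j, 0 ≤ c j := fun j =>
    div_nonneg (mul_nonneg (sub_nonneg.2 (hρub j)) (hβ j).le) (by positivity)
  have hc_eq_zero : ∀ j, c j = 0 ↔ γ j / β j = ρ := fun j => by
    have : 1 + ρ ≠ 0 := by positivity
    simp only [c, div_eq_zero_iff, mul_eq_zero, (hβ j).ne', this, or_false, sub_eq_zero]
    exact eq_comm
  have hγ_eq : ∀ j, ρ / (1 + ρ) * (β j + γ j) - c j = γ j := fun j => by
    have := hβ j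
    simp only [c]
    field_simp
    ring
  obtain ⟨C, hC, hbound⟩ := exists_tsum_ite_exp_mul_prod_rpow_le (a := fun j => β j + γ j)
    (fun j => add_pos (hβ j) (hγ j)) hc hγ' (θ := ρ / (1 + ρ)) (by positivity)
    ((hc_eq_zero j₀).2 hj₀)
  have hexp : ∑ j, (if c j = 0 then 1 + γ' j else 0) - 1 =
      ((Finset.univ.filter fun j => γ j / β j = ρ).card : ℝ) - 1 +
        ∑ j ∈ Finset.univ.filter fun j => γ j / β j = ρ, γ' j := by
    simp only [hc_eq_zero, ← sum_filter, sum_add_distrib, sum_const, nsmul_one]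
    ring
  refine ⟨C, hC, fun L hL => ?_⟩
  simpa only [hγ_eq, hexp] using hbound L hL

/-- exponential sum bound, work estimate: with
`ρ = max_j γ_j/β_j`, `J = {j : γ_j/β_j = ρ}`, `d* = |J|`, `γ'* = ∑_{j∈J} γ'_j`,
there is `C = C(β,γ,γ',d) > 0` such that for every `L ≥ 0`
`∑_{(β+γ)·k ≤ L} exp(γ·k) ∏_j (k_j+1)^{γ'_j} ≤ C exp(ρL/(1+ρ)) (L+1)^{d*-1+γ'*}`. -/
theorem exponential_sum_work_bound
    {d : ℕ} (hd : 1 ≤ d) (β γ γ' : Fin d → ℝ)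
    (hβ : ∀ j, 0 < β j) (hγ : ∀ j, 0 < γ j) (hγ' : ∀ j, 0 ≤ γ' j)
    (ρ : ℝ) (hρmem : ∃ j, γ j / β j = ρ) (hρub : ∀ j, γ j / β j ≤ ρ) :
    ∃ C > (0 : ℝ), ∀ L : ℝ, 0 ≤ L →
      (∑' k : Fin d → ℕ,
        if ∑ j, (β j + γ j) * (k j : ℝ) ≤ L
        then Real.exp (∑ j, γ j * (k j : ℝ)) * ∏ j, ((k j : ℝ) + 1) ^ (γ' j)
        else 0) ≤
      C * Real.exp (ρ / (1 + ρ) * L) *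
        (L + 1) ^
          (((Finset.univ.filter fun j => γ j / β j = ρ).card : ℝ) - 1 +
            ∑ j ∈ Finset.univ.filter fun j => γ j / β j = ρ, γ' j) :=
  exponential_sum_work_bound_general β γ γ' hβ hγ hγ' ρ hρmem hρub
end

section
/- (Infinite-dimensional Smolyak algorithm, exponential weights with summability) Let Y be a Banach space and let M be defined on all finitely supported sequences k : ℕ → ℕ (k_j ≥ 1, indices j ≥ 1), with mixed differences (Δ_mix M)(k) := (Δ_1 ∘ ⋯ ∘ Δ_n M)(k) for any n bounding the support of k (this is independent of the choice of n). Assume ‖(Δ_mix M)(k)‖_Y ≤ K₁ ∏_{j≥1} exp(−β_j k_j) for all finitely supported k, with K₁ > 0 and β_j > 0. Suppose there exists β₀ > 1 such that M̃ := Σ_{j=1}^∞ 1/(exp(β_j/β₀) − 1) < ∞. For L > 0 let I_L := {k finitely supported : Σ_{j≥1} β_j k_j ≤ L}, which is a finite set, let N := |I_L|, and let M_∞ := Σ_k (Δ_mix M)(k), the absolutely convergent sum over all finitely supported k. Then ‖S_{I_L}(M) − M_∞‖_Y ≤ (K₁/β₀) exp(β₀ M̃) N^{−(β₀−1)}. 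-/
/-- The `j`-th unidirectional difference operator on methods defined on finitely
supported sequences: `(Δ_j M)(k) = M(k) - M(k - e_j)` if `k j > 0`, else `M(k)`. -/
noncomputable def diffOpInf {Y : Type*} [AddCommGroup Y] (j : ℕ) (M : (ℕ →₀ ℕ) → Y) :
    (ℕ →₀ ℕ) → Y :=
  fun k => if k j = 0 then M k else M k - M (k.update j (k j - 1))

/-- The truncated mixed difference operator `Δ_1 ∘ ⋯ ∘ Δ_n`. -/
noncomputable def mixDiffUpTo {Y : Type*} [AddCommGroup Y] (n : ℕ) (M : (ℕ →₀ ℕ) → Y) :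
    (ℕ →₀ ℕ) → Y :=
  (List.range n).foldr (fun j F => diffOpInf j F) M

/-!
Put `g k = exp (-⟨β, k⟩ / β₀) = ∏ⱼ rⱼ ^ kⱼ` with `rⱼ = exp (-βⱼ / β₀)`. Over any finite set of
indices `k`, the sum of `g` is at most the product of geometric series
`∏ⱼ (1 - rⱼ)⁻¹ ≤ exp M̃ =: c`. Off `I_L` we have `exp (-⟨β, k⟩) ≤ s ^ (β₀ - 1) * g k` with
`s = exp (-L / β₀)`, while `g ≥ s` on `I_L`; hence the tail of `∑ Δ_mix M` is at most
`K₁ s ^ (β₀ - 1) (c - N s)`, and Bernoulli's inequality bounds `s ^ (β₀ - 1) (c - N s)` by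
`c ^ β₀ N ^ (-(β₀ - 1)) / β₀` for every `s > 0`.
-/

open Finset

theorem norm_sum_sub_le_of_norm_le {ι E : Type*} [NormedAddCommGroup E] {f : ι → E} {a : E}
    (hf : HasSum f a) {g : ι → ℝ} {b : ℝ} (hg : HasSum g b) (s : Finset ι)
    (h : ∀ i ∉ s, ‖f i‖ ≤ g i) : ‖∑ i ∈ s, f i - a‖ ≤ b - ∑ i ∈ s, g i := by
  rw [norm_sub_rev]
  exact ((s.hasSum_iff_compl).1 hf).norm_le_of_bounded ((s.hasSum_iff_compl).1 hg)
    fun i => h i i.2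

theorem mul_rpow_sub_one_mul_one_sub_le {p u : ℝ} (hp : 1 ≤ p) (hu : 0 < u) :
    p * (u ^ (p - 1) * (1 - u)) ≤ 1 := by
  have bernoulli := one_add_mul_self_le_rpow_one_add
    (by linarith [one_div_nonneg.2 hu.le] : (-1 : ℝ) ≤ 1 / u - 1) hp
  rw [add_sub_cancel, Real.div_rpow zero_le_one hu.le, Real.one_rpow,
    le_div_iff₀ (Real.rpow_pos_of_pos hu p)] at bernoulli
  have hsplit : u ^ p = u ^ (p - 1) * u := by rw [← Real.rpow_add_one hu.ne', sub_add_cancel]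
  have : p * (1 / u - 1) * u ^ p = p * (u ^ (p - 1) * (1 - u)) := by
    rw [hsplit]; field_simp
  nlinarith [Real.rpow_pos_of_pos hu (p - 1)]

theorem rpow_sub_one_mul_sub_mul_le {p c N s : ℝ} (hp : 1 ≤ p) (hc : 0 < c) (hN : 0 < N)
    (hs : 0 < s) : s ^ (p - 1) * (c - N * s) ≤ c ^ p * N ^ (-(p - 1)) / p := by
  set u := N * s / c
  have hu : 0 < u := by positivity
  have hs_eq : s = u * c / N := by simp only [u]; field_simp
  have hcp : c ^ (p - 1) * c = c ^ p := by rw [← Real.rpow_add_one hc.ne', sub_add_cancel]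
  calc s ^ (p - 1) * (c - N * s)
      = c ^ p * N ^ (-(p - 1)) * (u ^ (p - 1) * (1 - u)) := by
        rw [hs_eq, Real.div_rpow (by positivity) hN.le, Real.mul_rpow hu.le hc.le,
          Real.rpow_neg hN.le, ← hcp]
        field_simp
    _ ≤ c ^ p * N ^ (-(p - 1)) * (1 / p) := by
        gcongr
        rw [le_div_iff₀ (by linarith), mul_comm]
        exact mul_rpow_sub_one_mul_one_sub_le hp hu
    _ = c ^ p * N ^ (-(p - 1)) / p := by ring

theorem Finsupp.sum_prod_pow_le_prod_inv_one_sub {ι : Type*} {r : ι → ℝ} (hr0 : ∀ i, 0 ≤ r i)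
    (hr1 : ∀ i, r i < 1) {S : Finset (ι →₀ ℕ)} {s : Finset ι} (hS : ∀ k ∈ S, k.support ⊆ s) :
    ∑ k ∈ S, k.prod (fun i n => r i ^ n) ≤ ∏ i ∈ s, (1 - r i)⁻¹ := by
  classical
  let φ : (ι →₀ ℕ) → s → ℕ := fun k i => k i
  have hφ : Set.InjOn φ S := by
    intro k hk k' hk' hkk'
    ext i
    by_cases hi : i ∈ s
    · exact congrFun hkk' ⟨i, hi⟩
    · rw [notMem_support_iff.1 fun h => hi (hS k hk h),
        notMem_support_iff.1 fun h => hi (hS k' hk' h)]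
  have hterm_nonneg (i : ι) (n : ℕ) : 0 ≤ r i ^ n := pow_nonneg (hr0 i) n
  calc ∑ k ∈ S, k.prod (fun i n => r i ^ n)
      = ∑ k ∈ S, ∏ i : s, r i ^ φ k i := Finset.sum_congr rfl fun k hk => by
        rw [prod_of_support_subset k (hS k hk) _ fun _ _ => pow_zero _, ← prod_coe_sort]
    _ = ∑ x ∈ S.image φ, ∏ i : s, r i ^ x i :=
        (Finset.sum_image (f := fun x : s → ℕ => ∏ i : s, r i ^ x i) hφ).symm
    _ ≤ ∑ x ∈ Fintype.piFinset fun i : s => S.image (· i), ∏ i : s, r i ^ x i := by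
        refine sum_le_sum_of_subset_of_nonneg ?_ fun x _ _ =>
          prod_nonneg fun i _ => hterm_nonneg _ _
        intro x hx
        obtain ⟨k, hk, rfl⟩ := mem_image.1 hx
        exact Fintype.mem_piFinset.2 fun i => mem_image_of_mem (· i) hk
    _ = ∏ i : s, ∑ n ∈ S.image (· i), r i ^ n := (prod_univ_sum _ _).symm
    _ ≤ ∏ i : s, (1 - r i)⁻¹ :=
        prod_le_prod (fun i _ => Finset.sum_nonneg fun n _ => hterm_nonneg _ _) fun i _ =>
          sum_le_hasSum _ (fun n _ => hterm_nonneg _ _)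
            (hasSum_geometric_of_lt_one (hr0 i) (hr1 i))
    _ = ∏ i ∈ s, (1 - r i)⁻¹ := Finset.prod_coe_sort s fun i => (1 - r i)⁻¹

theorem prod_inv_one_sub_le_exp {ι : Type*} {r : ι → ℝ} (hr0 : ∀ i, 0 ≤ r i)
    (hr1 : ∀ i, r i < 1) {T : ℝ} (hT : HasSum (fun i => r i / (1 - r i)) T) (s : Finset ι) :
    ∏ i ∈ s, (1 - r i)⁻¹ ≤ Real.exp T := by
  have hq_nonneg (i : ι) : 0 ≤ r i / (1 - r i) := div_nonneg (hr0 i) (sub_nonneg.2 (hr1 i).le)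
  calc ∏ i ∈ s, (1 - r i)⁻¹ = ∏ i ∈ s, (r i / (1 - r i) + 1) := prod_congr rfl fun i _ => by
        field_simp [sub_ne_zero.2 (hr1 i).ne']
        ring
    _ ≤ ∏ i ∈ s, Real.exp (r i / (1 - r i)) :=
        prod_le_prod (fun i _ => by linarith [hq_nonneg i]) fun i _ => Real.add_one_le_exp _
    _ = Real.exp (∑ i ∈ s, r i / (1 - r i)) := (Real.exp_sum _ _).symm
    _ ≤ Real.exp T := Real.exp_le_exp.2 (sum_le_hasSum s (fun i _ => hq_nonneg i) hT)

theorem Finsupp.sum_prod_pow_le_exp {ι : Type*} {r : ι → ℝ} (hr0 : ∀ i, 0 ≤ r i)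
    (hr1 : ∀ i, r i < 1) {T : ℝ} (hT : HasSum (fun i => r i / (1 - r i)) T)
    (S : Finset (ι →₀ ℕ)) : ∑ k ∈ S, k.prod (fun i n => r i ^ n) ≤ Real.exp T := by
  classical
  exact (sum_prod_pow_le_prod_inv_one_sub hr0 hr1 fun k hk => le_sup (f := support) hk).trans
    (prod_inv_one_sub_le_exp hr0 hr1 hT _)

theorem Real.exp_neg_finsupp_sum_mul {ι : Type*} (a : ι → ℝ) (k : ι →₀ ℕ) :
    Real.exp (-∑ i ∈ k.support, a i * k i) = k.prod fun i n => Real.exp (-a i) ^ n := by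
  simp only [Finsupp.prod, ← Real.exp_nat_mul, ← Real.exp_sum, ← sum_neg_distrib]
  exact congrArg Real.exp (sum_congr rfl fun i _ => by ring)

theorem Finsupp.sum_exp_neg_sum_mul_le {ι : Type*} {a : ι → ℝ} (ha : ∀ i, 0 < a i) {T : ℝ}
    (hT : HasSum (fun i => 1 / (Real.exp (a i) - 1)) T) (S : Finset (ι →₀ ℕ)) :
    ∑ k ∈ S, Real.exp (-∑ i ∈ k.support, a i * k i) ≤ Real.exp T := by
  have hT' : HasSum (fun i => Real.exp (-a i) / (1 - Real.exp (-a i))) T := by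
    convert hT using 2 with i
    have : Real.exp (a i) - 1 ≠ 0 := (sub_pos.2 (Real.one_lt_exp_iff.2 (ha i))).ne'
    rw [Real.exp_neg]
    field_simp
  simpa only [Real.exp_neg_finsupp_sum_mul] using
    sum_prod_pow_le_exp (fun i => (Real.exp_pos _).le)
      (fun i => Real.exp_lt_one_iff.2 (neg_lt_zero.2 (ha i))) hT' S

theorem Real.exp_neg_le_exp_neg_div_rpow_mul {p L w : ℝ} (hp : 1 ≤ p) (hLw : L ≤ w) :
    Real.exp (-w) ≤ Real.exp (-L / p) ^ (p - 1) * Real.exp (-w / p) := by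
  rw [← Real.exp_mul, ← Real.exp_add, Real.exp_le_exp, div_mul_eq_mul_div, ← add_div,
    le_div_iff₀ (by linarith)]
  nlinarith

theorem norm_sum_sub_le_of_norm_le_exp_neg {κ E : Type*} [NormedAddCommGroup E] {D : κ → E}
    {a : E} (hD : HasSum D a) {w : κ → ℝ} {K : ℝ} (hK : 0 ≤ K)
    (hDw : ∀ k, ‖D k‖ ≤ K * Real.exp (-w k)) {p : ℝ} (hp : 1 ≤ p) {c : ℝ}
    (hc : ∀ S : Finset κ, ∑ k ∈ S, Real.exp (-w k / p) ≤ c) {L : ℝ} {I : Finset κ}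
    (hI : ∀ k, k ∈ I ↔ w k ≤ L) (hI_ne : I.Nonempty) :
    ‖∑ k ∈ I, D k - a‖ ≤ K / p * c ^ p * (I.card : ℝ) ^ (-(p - 1)) := by
  set g : κ → ℝ := fun k => Real.exp (-w k / p)
  set s := Real.exp (-L / p)
  have hg : HasSum g (∑' k, g k) := (summable_of_sum_le (fun k => (Real.exp_pos _).le) hc).hasSum
  have htail (k : κ) (hk : k ∉ I) : ‖D k‖ ≤ K * s ^ (p - 1) * g k := by
    rw [mul_assoc]
    exact (hDw k).trans (mul_le_mul_of_nonneg_left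
      (Real.exp_neg_le_exp_neg_div_rpow_mul hp (le_of_not_ge fun h => hk ((hI k).2 h))) hK)
  have hsI : (I.card : ℝ) * s ≤ ∑ k ∈ I, g k := by
    rw [← nsmul_eq_mul, ← sum_const]
    exact sum_le_sum fun k hk => Real.exp_le_exp.2
      (div_le_div_of_nonneg_right (neg_le_neg ((hI k).1 hk)) (by linarith))
  have hc_pos : 0 < c := (sum_pos (fun k _ => Real.exp_pos _) hI_ne).trans_le (hc I)
  calc ‖∑ k ∈ I, D k - a‖
      ≤ K * s ^ (p - 1) * ∑' k, g k - ∑ k ∈ I, K * s ^ (p - 1) * g k :=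
        norm_sum_sub_le_of_norm_le hD (hg.mul_left _) I htail
    _ = K * (s ^ (p - 1) * (∑' k, g k - ∑ k ∈ I, g k)) := by rw [← mul_sum]; ring
    _ ≤ K * (s ^ (p - 1) * (c - I.card * s)) := by
        gcongr
        exact hg.tsum_eq ▸ tsum_le_of_sum_le' hc_pos.le hc
    _ ≤ K * (c ^ p * (I.card : ℝ) ^ (-(p - 1)) / p) := by
        gcongr
        exact rpow_sub_one_mul_sub_mul_le hp hc_pos (by exact_mod_cast hI_ne.card_pos)
          (Real.exp_pos _)
    _ = K / p * c ^ p * (I.card : ℝ) ^ (-(p - 1)) := by ring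

theorem smolyak_infinite_dimensional_summable_weights_general
    {Y : Type*} [NormedAddCommGroup Y]
    (D : (ℕ →₀ ℕ) → Y)
    (K₁ : ℝ) (hK₁ : 0 < K₁) (β : ℕ → ℝ) (hβ : ∀ j, 0 < β j)
    (hDbound : ∀ k : ℕ →₀ ℕ,
      ‖D k‖ ≤ K₁ * Real.exp (-∑ j ∈ k.support, β j * (k j : ℝ)))
    (β₀ : ℝ) (hβ₀ : 1 < β₀)
    (Mt : ℝ) (hMt : HasSum (fun j : ℕ => 1 / (Real.exp (β j / β₀) - 1)) Mt)
    (Minf : Y) (hMinf : HasSum D Minf)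
    (L : ℝ) (hL : 0 < L)
    (hFin : {k : ℕ →₀ ℕ | ∑ j ∈ k.support, β j * (k j : ℝ) ≤ L}.Finite) :
    ‖(∑ k ∈ hFin.toFinset, D k) - Minf‖ ≤
      K₁ / β₀ * Real.exp (β₀ * Mt) *
        (hFin.toFinset.card : ℝ) ^ (-(β₀ - 1)) := by
  have hsum (S : Finset (ℕ →₀ ℕ)) :
      ∑ k ∈ S, Real.exp (-(∑ j ∈ k.support, β j * (k j : ℝ)) / β₀) ≤ Real.exp Mt := by
    simpa only [neg_div, sum_div, mul_div_right_comm] using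
      Finsupp.sum_exp_neg_sum_mul_le (fun j => div_pos (hβ j) (zero_lt_one.trans hβ₀)) hMt S
  have hI_ne : hFin.toFinset.Nonempty := ⟨0, by simpa using hL.le⟩
  rw [mul_comm β₀, Real.exp_mul]
  exact norm_sum_sub_le_of_norm_le_exp_neg hMinf hK₁.le hDbound hβ₀.le hsum
    (fun k => hFin.mem_toFinset) hI_ne

/-- infinite-dimensional Smolyak algorithm, exponential weights
with summability: let `D` be the mixed difference function of `M`
(`D k = (Δ_1∘⋯∘Δ_n M)(k)` for every `n` bounding the support of `k`), with
`‖D k‖ ≤ K₁ ∏_j exp(-β_j k_j)`. If `β₀ > 1` and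
`M̃ = ∑_j 1/(exp(β_j/β₀)-1) < ∞`, and `I_L = {k : ∑_j β_j k_j ≤ L}` (a finite
set) has `N` elements, and `M_∞ = ∑_k D k` (absolutely convergent), then
`‖S_{I_L}(M) - M_∞‖ ≤ (K₁/β₀) exp(β₀ M̃) N^{-(β₀-1)}`. -/
theorem smolyak_infinite_dimensional_summable_weights
    {Y : Type*} [NormedAddCommGroup Y] [NormedSpace ℝ Y] [CompleteSpace Y]
    (M D : (ℕ →₀ ℕ) → Y)
    (hD : ∀ (k : ℕ →₀ ℕ) (n : ℕ), (∀ j, n ≤ j → k j = 0) → D k = mixDiffUpTo n M k)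
    (K₁ : ℝ) (hK₁ : 0 < K₁) (β : ℕ → ℝ) (hβ : ∀ j, 0 < β j)
    (hDbound : ∀ k : ℕ →₀ ℕ,
      ‖D k‖ ≤ K₁ * Real.exp (-∑ j ∈ k.support, β j * (k j : ℝ)))
    (β₀ : ℝ) (hβ₀ : 1 < β₀)
    (Mt : ℝ) (hMt : HasSum (fun j : ℕ => 1 / (Real.exp (β j / β₀) - 1)) Mt)
    (Minf : Y) (hMinf : HasSum D Minf)
    (L : ℝ) (hL : 0 < L)
    (hFin : {k : ℕ →₀ ℕ | ∑ j ∈ k.support, β j * (k j : ℝ) ≤ L}.Finite) :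
    ‖(∑ k ∈ hFin.toFinset, D k) - Minf‖ ≤
      K₁ / β₀ * Real.exp (β₀ * Mt) *
        (hFin.toFinset.card : ℝ) ^ (-(β₀ - 1)) :=
  smolyak_infinite_dimensional_summable_weights_general D K₁ hK₁ β hβ hDbound β₀ hβ₀ Mt hMt Minf
    hMinf L hL hFin
end
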